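/- arXiv:2107.03668 — 6 statements merged into one kernel-verified Lean document; each statement's English description precedes it below -/
import Mathlib

section
/- Let 0 ≤ λ < γ ≤ δ be real numbers. A harmonic function f = s + conj(t) in H⁰ belongs to the class R_H⁰(γ,δ,λ) if and only if for every complex number ε with |ε| = 1, the analytic function F_ε = s + ε·t belongs to the class R(γ,δ,λ). -/
open Complex Metric Set ComplexConjugate

/-- The third-order differential operator γ g'(z) + δ z g''(z) + ((δ-γ)/2) z² g'''(z). -/
noncomputable def dop (γ δ : ℝ) (g : ℂ → ℂ) (z : ℂ) : ℂ :=
  (γ : ℂ) * deriv g z + (δ : ℂ) * z * iteratedDeriv 2 g z +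
    (((δ : ℂ) - (γ : ℂ)) / 2) * z ^ 2 * iteratedDeriv 3 g z

/-- Membership in H⁰ : s, t analytic on the unit disk, s(0)=0, s'(0)=1, t(0)=0, t'(0)=0. -/
def MemH0 (s t : ℂ → ℂ) : Prop :=
  AnalyticOnNhd ℂ s (ball 0 1) ∧ AnalyticOnNhd ℂ t (ball 0 1) ∧
    s 0 = 0 ∧ deriv s 0 = 1 ∧ t 0 = 0 ∧ deriv t 0 = 0

/-- The class R_H⁰(γ,δ,λ). -/
noncomputable def MemRH0 (γ δ lam : ℝ) (s t : ℂ → ℂ) : Prop :=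
  MemH0 s t ∧
    ∀ z ∈ ball (0 : ℂ) 1, ‖dop γ δ t z‖ < (dop γ δ s z - (lam : ℂ)).re

/-- The class R(γ,δ,λ) of analytic functions. -/
noncomputable def MemR (γ δ lam : ℝ) (F : ℂ → ℂ) : Prop :=
  AnalyticOnNhd ℂ F (ball 0 1) ∧ F 0 = 0 ∧ deriv F 0 = 1 ∧
    ∀ z ∈ ball (0 : ℂ) 1, lam < (dop γ δ F z).re

lemma analyticAt_deriv {f : ℂ → ℂ} {z : ℂ} (h : AnalyticAt ℂ f z) :
    AnalyticAt ℂ (deriv f) z := by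
  have h2 : AnalyticAt ℂ ((ContinuousLinearMap.apply ℂ ℂ (1 : ℂ)) ∘ (fderiv ℂ f)) z :=
    ((ContinuousLinearMap.apply ℂ ℂ (1 : ℂ)).analyticAt _).comp h.fderiv
  have : ((ContinuousLinearMap.apply ℂ ℂ (1 : ℂ)) ∘ (fderiv ℂ f)) = deriv f := by
    ext w
    simp [Function.comp, fderiv_apply_one_eq_deriv]
  rwa [this] at h2

lemma iter_add (ε : ℂ) : ∀ (n : ℕ) (s t : ℂ → ℂ) (z : ℂ), AnalyticAt ℂ s z →
    AnalyticAt ℂ t z →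
    iteratedDeriv n (fun w => s w + ε * t w) z = iteratedDeriv n s z + ε * iteratedDeriv n t z
  | 0, s, t, z, _, _ => by simp
  | (n+1), s, t, z, hs, ht => by
    have hev : deriv (fun w => s w + ε * t w) =ᶠ[nhds z]
        fun w => deriv s w + ε * deriv t w := by
      filter_upwards [hs.eventually_analyticAt, ht.eventually_analyticAt] with w hsw htw
      rw [deriv_fun_add hsw.differentiableAt (htw.differentiableAt.const_mul ε),
        deriv_const_mul ε htw.differentiableAt]
    rw [iteratedDeriv_succ', iteratedDeriv_succ', iteratedDeriv_succ',
      hev.iteratedDeriv_eq n, iter_add ε n (deriv s) (deriv t) z (analyticAt_deriv hs) (analyticAt_deriv ht)]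

lemma dop_add (γ δ : ℝ) (ε : ℂ) {s t : ℂ → ℂ} {z : ℂ} (hs : AnalyticAt ℂ s z)
    (ht : AnalyticAt ℂ t z) :
    dop γ δ (fun w => s w + ε * t w) z = dop γ δ s z + ε * dop γ δ t z := by
  have h1 := iter_add ε 1 s t z hs ht
  have h2 := iter_add ε 2 s t z hs ht
  have h3 := iter_add ε 3 s t z hs ht
  simp only [iteratedDeriv_one] at h1
  unfold dop
  rw [h1, h2, h3]; ring

lemma key (v w : ℂ) (a : ℝ) :
    (∀ ε : ℂ, ‖ε‖ = 1 → a < (v + ε * w).re) ↔ ‖w‖ < (v - (a : ℂ)).re := by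
  constructor
  · intro h
    by_cases hw : w = 0
    · have := h 1 (by simp)
      simp [hw] at this ⊢
      simpa using this
    · have hwn : ‖w‖ ≠ 0 := norm_ne_zero_iff.mpr hw
      have hcne : (‖w‖ : ℂ) ≠ 0 := by exact_mod_cast hwn
      have hε : ‖-((starRingEnd ℂ) w) / (‖w‖ : ℂ)‖ = 1 := by
        rw [norm_div, norm_neg, RCLike.norm_conj, Complex.norm_real,
          Real.norm_eq_abs, _root_.abs_of_nonneg (norm_nonneg w), div_self hwn]
      have := h _ hε
      have hcw : (starRingEnd ℂ) w * w = (‖w‖ : ℂ) ^ 2 := by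
        rw [mul_comm, Complex.mul_conj]
        push_cast
        rw [Complex.normSq_eq_norm_sq]
        push_cast
        ring
      have hmul : -((starRingEnd ℂ) w) / (‖w‖ : ℂ) * w = -(‖w‖ : ℂ) := by
        rw [div_mul_eq_mul_div, neg_mul, hcw, neg_div, sq, mul_div_assoc,
          div_self hcne, mul_one]
      rw [hmul] at this
      simp only [Complex.add_re, Complex.neg_re, Complex.ofReal_re] at this
      simp only [Complex.sub_re, Complex.ofReal_re]
      linarith
  · intro h ε hε
    have h1 : -(‖w‖) ≤ (ε * w).re := by
      have h3 := neg_abs_le (ε * w).re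
      have h4 := Complex.abs_re_le_norm (ε * w)
      have h2 : ‖ε * w‖ = ‖w‖ := by
        rw [norm_mul, hε, one_mul]
      rw [h2] at h4
      linarith
    simp only [Complex.sub_re, Complex.ofReal_re] at h
    simp only [Complex.add_re]
    linarith

/-- A harmonic f = s + conj t in H⁰ belongs to R_H⁰(γ,δ,λ) iff for every ε with |ε| = 1,
the analytic function F_ε = s + ε t belongs to R(γ,δ,λ). -/
theorem stmt0 (γ δ lam : ℝ) (hlam : 0 ≤ lam) (hlg : lam < γ) (hgd : γ ≤ δ)
    (s t : ℂ → ℂ) (hH0 : MemH0 s t) :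
    MemRH0 γ δ lam s t ↔
      ∀ ε : ℂ, ‖ε‖ = 1 → MemR γ δ lam (fun z => s z + ε * t z) := by
  obtain ⟨hs, ht, hs0, hs1, ht0, ht1⟩ := hH0
  have h0 : (0 : ℂ) ∈ ball (0 : ℂ) 1 := mem_ball_self one_pos
  constructor
  · rintro ⟨_, hineq⟩ ε hε
    refine ⟨fun z hz => (hs z hz).add (analyticAt_const.mul (ht z hz)), by simp [hs0, ht0],
      ?_, fun z hz => ?_⟩
    · rw [deriv_fun_add (hs 0 h0).differentiableAt
        (((ht 0 h0).differentiableAt).const_mul ε), deriv_const_mul ε (ht 0 h0).differentiableAt,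
        hs1, ht1]
      simp
    · rw [dop_add γ δ ε (hs z hz) (ht z hz)]
      exact (key (dop γ δ s z) (dop γ δ t z) lam).mpr (hineq z hz) ε hε
  · intro h
    refine ⟨⟨hs, ht, hs0, hs1, ht0, ht1⟩, fun z hz => ?_⟩
    refine (key (dop γ δ s z) (dop γ δ t z) lam).mp (fun ε hε => ?_)
    have := (h ε hε).2.2.2 z hz
    rwa [dop_add γ δ ε (hs z hz) (ht z hz)] at this
end

section
/- Let 0 ≤ λ < γ ≤ δ be real numbers. If F belongs to the class R(γ,δ,λ), then Re{F'(z)} > 0 for all z in the open unit disk U, and consequently F is close-to-convex (in particular, univalent) in U. -/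
open Complex Metric Set ComplexConjugate

/-- φ is a convex univalent analytic function on the unit disk. -/
def IsConvexUnivalent (φ : ℂ → ℂ) : Prop :=
  AnalyticOnNhd ℂ φ (ball 0 1) ∧ InjOn φ (ball 0 1) ∧ Convex ℝ (φ '' ball 0 1)

/-- An analytic function F is close-to-convex on the unit disk if there is a convex
univalent analytic φ with Re (F'/φ') > 0 on the disk. -/
def IsCTCAnalytic (F : ℂ → ℂ) : Prop :=
  ∃ φ : ℂ → ℂ, IsConvexUnivalent φ ∧
    ∀ z ∈ ball (0 : ℂ) 1, 0 < (deriv F z / deriv φ z).re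

lemma myKey (γ δ lam : ℝ) (hlam : 0 ≤ lam) (hlg : lam < γ) (hgd : γ ≤ δ)
    (q : ℂ → ℂ) (hq : AnalyticOnNhd ℂ q (ball 0 1))
    (hG : ∀ w ∈ ball (0:ℂ) 1,
      lam < ((γ:ℂ) * q w + (((δ:ℂ)-(γ:ℂ))/2) * w * deriv q w).re) :
    ∀ z ∈ ball (0:ℂ) 1, 0 < (q z).re := by
  have hγ : 0 < γ := lt_of_le_of_lt hlam hlg
  have hγc : (γ:ℂ) ≠ 0 := by exact_mod_cast hγ.ne'
  rcases eq_or_lt_of_le hgd with hde | hde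
  · intro z hz
    have h := hG z hz
    rw [← hde] at h
    simp only [sub_self, zero_div, zero_mul, add_zero] at h
    have h2 : ((γ:ℂ) * q z).re = γ * (q z).re := by simp [Complex.mul_re]
    nlinarith [h, h2]
  · obtain ⟨e, he, hecast⟩ : ∃ e : ℝ, 0 < e ∧ (e:ℂ) = (((δ:ℂ)-(γ:ℂ))/2) / (γ:ℂ) := by
      refine ⟨((δ - γ)/2)/γ, div_pos (by linarith) hγ, by push_cast; ring⟩
    intro z hz
    have hznorm : ‖z‖ < 1 := by simpa using hz
    set G : ℂ → ℂ := fun w => (γ:ℂ) * q w + (((δ:ℂ)-(γ:ℂ))/2) * w * deriv q w with hGdef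
    set c : ℝ → ℂ := fun u => ((u ^ e : ℝ) : ℂ) * z with hcdef
    have hc0 : c 0 = 0 := by simp [hcdef, Real.zero_rpow he.ne']
    have hc1 : c 1 = z := by simp [hcdef, Real.one_rpow]
    have hcmem : ∀ u ∈ Icc (0:ℝ) 1, c u ∈ ball (0:ℂ) 1 := by
      intro u hu
      simp only [hcdef, mem_ball, dist_zero_right, norm_mul, Complex.norm_real,
        Real.norm_eq_abs]
      have h1 : |u ^ e| = u ^ e := abs_of_nonneg (Real.rpow_nonneg hu.1 e)
      have h2 : u ^ e ≤ 1 := Real.rpow_le_one hu.1 hu.2 he.le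
      calc |u ^ e| * ‖z‖ ≤ 1 * ‖z‖ := by
            rw [h1]; exact mul_le_mul_of_nonneg_right h2 (norm_nonneg z)
        _ < 1 := by simpa using hznorm
    have hccont : ∀ u : ℝ, ContinuousAt c u := fun u =>
      (ContinuousAt.comp Complex.continuous_ofReal.continuousAt
        (Real.continuousAt_rpow_const u e (Or.inr he.le))).mul_const z
    have hDeriv : ∀ u ∈ uIcc (0:ℝ) 1,
        HasDerivAt (fun u : ℝ => (u:ℂ) * q (c u)) ((γ:ℂ)⁻¹ * G (c u)) u := by
      rw [uIcc_of_le (by norm_num : (0:ℝ) ≤ 1)]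
      intro u hu
      rcases eq_or_lt_of_le hu.1 with hu0 | hu0
      · subst hu0
        have hval : (γ:ℂ)⁻¹ * G (c 0) = q 0 := by
          rw [hc0]
          simp only [hGdef, mul_zero, zero_mul, add_zero]
          rw [← mul_assoc, inv_mul_cancel₀ hγc, one_mul]
        rw [hval, hasDerivAt_iff_tendsto_slope]
        have hqc : ContinuousAt (fun u => q (c u)) 0 :=
          ContinuousAt.comp (hc0.symm ▸ (hq 0 (by simp)).continuousAt) (hccont 0)
        have hqc0 : Filter.Tendsto (fun u => q (c u)) (nhdsWithin 0 {(0:ℝ)}ᶜ)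
            (nhds (q 0)) := by
          have h3 := hqc.tendsto
          rw [hc0] at h3
          exact h3.mono_left nhdsWithin_le_nhds
        refine hqc0.congr' ?_
        filter_upwards [self_mem_nhdsWithin] with u hu'
        have hune : (u:ℝ) ≠ 0 := hu'
        simp only [slope, vsub_eq_sub, Complex.ofReal_zero, zero_mul, sub_zero,
          Complex.real_smul, Complex.ofReal_inv]
        rw [← mul_assoc, inv_mul_cancel₀ (by exact_mod_cast hune), one_mul]
      · have hcd : HasDerivAt c (((e * u ^ (e-1) : ℝ) : ℂ) * z) u := by
          have h1 : HasDerivAt (fun u : ℝ => u ^ e) (e * u ^ (e-1)) u := by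
            simpa [mul_comm] using Real.hasDerivAt_rpow_const (p := e) (Or.inl hu0.ne')
          exact (h1.ofReal_comp).mul_const z
        have hmem : c u ∈ ball (0:ℂ) 1 := hcmem u hu
        have hqd : HasDerivAt q (deriv q (c u)) (c u) :=
          (hq (c u) hmem).differentiableAt.hasDerivAt
        have hcomp : HasDerivAt (fun u => q (c u))
            ((((e * u ^ (e-1) : ℝ) : ℂ) * z) • deriv q (c u)) u :=
          (hqd.scomp u hcd : _)
        have hid : HasDerivAt (fun u : ℝ => (u:ℂ)) 1 u := by
          simpa using (hasDerivAt_id u).ofReal_comp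
        have hprod : HasDerivAt (fun u : ℝ => (u:ℂ) * q (c u)) _ u := hid.mul hcomp
        convert hprod using 1
        simp only [smul_eq_mul, one_mul, hGdef]
        have hrpow : ((u ^ e : ℝ) : ℂ) = ((u ^ (e-1) : ℝ) : ℂ) * (u : ℂ) := by
          rw [← Complex.ofReal_mul]
          congr 1
          rw [Real.rpow_sub hu0, Real.rpow_one, div_mul_cancel₀ _ hu0.ne']
        rw [show ((e * u ^ (e-1) : ℝ) : ℂ) = (e:ℂ) * ((u ^ (e-1) : ℝ) : ℂ) by push_cast; ring]
        rw [hecast]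
        show (γ:ℂ)⁻¹ * ((γ:ℂ) * q (c u) + (((δ:ℂ)-(γ:ℂ))/2) * (c u) * deriv q (c u))
          = q (c u) + (u:ℂ) * ((((δ:ℂ)-(γ:ℂ))/2/(γ:ℂ)) * ((u ^ (e-1) : ℝ) : ℂ) * z
              * deriv q (c u))
        rw [hcdef]
        simp only
        rw [hrpow]
        field_simp
    have hGcont : ContinuousOn (fun u : ℝ => (γ:ℂ)⁻¹ * G (c u)) (Icc 0 1) := by
      have hGc : ContinuousOn G (ball (0:ℂ) 1) := by
        apply ContinuousOn.add
        · exact (hq.continuousOn).const_smul (γ:ℂ) |>.congr (fun x hx => by simp [smul_eq_mul])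
        · exact ContinuousOn.mul (continuousOn_const.mul continuousOn_id)
            ((hq.deriv).continuousOn)
      have hccont' : ContinuousOn c (Icc 0 1) := fun u _ => (hccont u).continuousWithinAt
      exact (ContinuousOn.comp hGc hccont' hcmem).const_smul ((γ:ℂ)⁻¹) |>.congr
        (fun x hx => by simp [smul_eq_mul])
    have hInt : IntervalIntegrable (fun u : ℝ => (γ:ℂ)⁻¹ * G (c u))
        MeasureTheory.volume 0 1 := by
      apply ContinuousOn.intervalIntegrable
      rwa [uIcc_of_le (by norm_num : (0:ℝ) ≤ 1)]
    have hFTC : ∫ u in (0:ℝ)..1, (γ:ℂ)⁻¹ * G (c u)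
        = (1:ℂ) * q (c 1) - (0:ℂ) * q (c 0) := by
      have := intervalIntegral.integral_eq_sub_of_hasDerivAt hDeriv hInt
      simpa using this
    have hqz : q z = ∫ u in (0:ℝ)..1, (γ:ℂ)⁻¹ * G (c u) := by
      rw [hFTC, hc1]; ring
    have hre : (q z).re = ∫ u in (0:ℝ)..1, ((γ:ℂ)⁻¹ * G (c u)).re := by
      rw [hqz]
      exact (Complex.reCLM.intervalIntegral_comp_comm hInt).symm
    rw [hre]
    apply intervalIntegral.intervalIntegral_pos_of_pos_on
    · apply ContinuousOn.intervalIntegrable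
      rw [uIcc_of_le (by norm_num : (0:ℝ) ≤ 1)]
      exact Complex.continuous_re.comp_continuousOn hGcont
    · intro u hu
      have hmem : c u ∈ ball (0:ℂ) 1 := hcmem u ⟨hu.1.le, hu.2.le⟩
      have hGre := hG (c u) hmem
      have : ((γ:ℂ)⁻¹ * G (c u)).re = γ⁻¹ * (G (c u)).re := by
        rw [show ((γ:ℂ))⁻¹ = ((γ⁻¹ : ℝ) : ℂ) by push_cast; ring]
        exact Complex.re_ofReal_mul _ _
      rw [this]
      exact mul_pos (inv_pos.mpr hγ) (lt_of_le_of_lt hlam hGre)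
    · norm_num

lemma myAvg (p : ℂ → ℂ) (hp : AnalyticOnNhd ℂ p (ball 0 1))
    (hpos : ∀ w ∈ ball (0:ℂ) 1, 0 < (p w + w * deriv p w).re) :
    ∀ z ∈ ball (0:ℂ) 1, 0 < (p z).re := by
  intro z hz
  have hznorm : ‖z‖ < 1 := by simpa using hz
  set c : ℝ → ℂ := fun t => (t:ℂ) * z with hcdef
  have hcmem : ∀ t ∈ Icc (0:ℝ) 1, c t ∈ ball (0:ℂ) 1 := by
    intro t ht
    simp only [hcdef, mem_ball, dist_zero_right, norm_mul, Complex.norm_real,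
      Real.norm_eq_abs]
    calc |t| * ‖z‖ ≤ 1 * ‖z‖ := by
          exact mul_le_mul_of_nonneg_right (abs_le.mpr ⟨by linarith [ht.1], ht.2⟩)
            (norm_nonneg z)
      _ < 1 := by simpa using hznorm
  have hDeriv : ∀ t ∈ uIcc (0:ℝ) 1,
      HasDerivAt (fun t : ℝ => (t:ℂ) * p (c t)) (p (c t) + (c t) * deriv p (c t)) t := by
    rw [uIcc_of_le (by norm_num : (0:ℝ) ≤ 1)]
    intro t ht
    have hcd : HasDerivAt c z t := by
      simpa using ((hasDerivAt_id t).ofReal_comp).mul_const z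
    have hmem : c t ∈ ball (0:ℂ) 1 := hcmem t ht
    have hpd : HasDerivAt p (deriv p (c t)) (c t) :=
      (hp (c t) hmem).differentiableAt.hasDerivAt
    have hcomp : HasDerivAt (fun t => p (c t)) (z • deriv p (c t)) t :=
      (hpd.scomp t hcd : _)
    have hid : HasDerivAt (fun t : ℝ => (t:ℂ)) 1 t := by
      simpa using (hasDerivAt_id t).ofReal_comp
    have hprod : HasDerivAt (fun t : ℝ => (t:ℂ) * p (c t)) _ t := hid.mul hcomp
    convert hprod using 1
    simp only [smul_eq_mul, one_mul, hcdef]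
    ring
  have hqcont : ContinuousOn (fun t : ℝ => p (c t) + (c t) * deriv p (c t)) (Icc 0 1) := by
    have hq : ContinuousOn (fun w : ℂ => p w + w * deriv p w) (ball (0:ℂ) 1) :=
      (hp.continuousOn).add (continuousOn_id.mul (hp.deriv).continuousOn)
    have hccont : ContinuousOn c (Icc 0 1) :=
      (Complex.continuous_ofReal.mul continuous_const).continuousOn
    exact ContinuousOn.comp hq hccont hcmem
  have hInt : IntervalIntegrable (fun t : ℝ => p (c t) + (c t) * deriv p (c t))
      MeasureTheory.volume 0 1 := by
    apply ContinuousOn.intervalIntegrable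
    rwa [uIcc_of_le (by norm_num : (0:ℝ) ≤ 1)]
  have hFTC := intervalIntegral.integral_eq_sub_of_hasDerivAt hDeriv hInt
  have hpz : p z = ∫ t in (0:ℝ)..1, (p (c t) + (c t) * deriv p (c t)) := by
    rw [hFTC]
    simp [hcdef]
  have hre : (p z).re = ∫ t in (0:ℝ)..1, (p (c t) + (c t) * deriv p (c t)).re := by
    rw [hpz]
    exact (Complex.reCLM.intervalIntegral_comp_comm hInt).symm
  rw [hre]
  apply intervalIntegral.intervalIntegral_pos_of_pos_on
  · apply ContinuousOn.intervalIntegrable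
    rw [uIcc_of_le (by norm_num : (0:ℝ) ≤ 1)]
    exact Complex.continuous_re.comp_continuousOn hqcont
  · intro t ht
    exact hpos (c t) (hcmem t ⟨ht.1.le, ht.2.le⟩)
  · norm_num

lemma myNW (F : ℂ → ℂ) (hA : AnalyticOnNhd ℂ F (ball 0 1))
    (hpos : ∀ z ∈ ball (0:ℂ) 1, 0 < (deriv F z).re) :
    InjOn F (ball (0:ℂ) 1) := by
  intro a ha b hb hab
  by_contra hne
  set c : ℝ → ℂ := fun t => a + (t:ℂ) * (b - a) with hcdef
  have hcmem : ∀ t ∈ Icc (0:ℝ) 1, c t ∈ ball (0:ℂ) 1 := by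
    intro t ht
    have h : c t = (1 - t) • a + t • b := by
      simp [hcdef, Complex.real_smul]; ring
    rw [h]
    exact (convex_ball (0:ℂ) 1) ha hb (by linarith [ht.2]) ht.1 (by ring)
  set g : ℝ → ℝ := fun t => (F (c t) * (starRingEnd ℂ) (b - a)).re with hgdef
  have hg : ∀ t ∈ Icc (0:ℝ) 1,
      HasDerivAt g (Complex.normSq (b - a) * (deriv F (c t)).re) t := by
    intro t ht
    have hcd : HasDerivAt c (b - a) t := by
      simpa [hcdef] using (((hasDerivAt_id t).ofReal_comp).mul_const (b - a)).const_add a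
    have hmem := hcmem t ht
    have hFd : HasDerivAt F (deriv F (c t)) (c t) :=
      (hA (c t) hmem).differentiableAt.hasDerivAt
    have hcomp : HasDerivAt (fun t => F (c t)) ((b - a) • deriv F (c t)) t :=
      (hFd.scomp t hcd : _)
    have hmul := hcomp.mul_const ((starRingEnd ℂ) (b - a))
    have hre : HasDerivAt g _ t := Complex.reCLM.hasFDerivAt.comp_hasDerivAt t hmul
    convert hre using 1
    simp only [smul_eq_mul, Complex.reCLM_apply]
    have h2 : (b - a) * deriv F (c t) * (starRingEnd ℂ) (b - a)
        = ((Complex.normSq (b - a) : ℝ) : ℂ) * deriv F (c t) := by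
      rw [← Complex.mul_conj]
      ring
    rw [h2, Complex.re_ofReal_mul]
  have hmono : StrictMonoOn g (Icc 0 1) := by
    apply strictMonoOn_of_deriv_pos (convex_Icc 0 1)
    · intro t ht
      exact (hg t ht).continuousAt.continuousWithinAt
    · intro t ht
      rw [interior_Icc] at ht
      rw [(hg t ⟨ht.1.le, ht.2.le⟩).deriv]
      have hnsq : 0 < Complex.normSq (b - a) :=
        Complex.normSq_pos.mpr (sub_ne_zero.mpr (Ne.symm hne))
      exact mul_pos hnsq (hpos (c t) (hcmem t ⟨ht.1.le, ht.2.le⟩))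
  have h01 : g 0 < g 1 := hmono (by norm_num) (by norm_num) (by norm_num)
  have hc0 : c 0 = a := by simp [hcdef]
  have hc1 : c 1 = b := by simp [hcdef]
  rw [hgdef] at h01
  simp only [hc0, hc1, hab] at h01
  exact lt_irrefl _ h01

/-- If F ∈ R(γ,δ,λ) then Re F' > 0 on the unit disk, and consequently F is
close-to-convex, in particular univalent, there. -/
theorem stmt1 (γ δ lam : ℝ) (hlam : 0 ≤ lam) (hlg : lam < γ) (hgd : γ ≤ δ)
    (F : ℂ → ℂ) (hF : MemR γ δ lam F) :
    (∀ z ∈ ball (0 : ℂ) 1, 0 < (deriv F z).re) ∧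
      IsCTCAnalytic F ∧ InjOn F (ball (0 : ℂ) 1) := by
  obtain ⟨hA, hF0, hF'0, hbd⟩ := hF
  set q : ℂ → ℂ := fun w => deriv F w + w * deriv (deriv F) w with hqdef
  have hqa : AnalyticOnNhd ℂ q (ball 0 1) :=
    (hA.deriv).add (analyticOnNhd_id.mul (hA.deriv.deriv))
  have h2 : iteratedDeriv 2 F = deriv (deriv F) := by
    rw [iteratedDeriv_succ, iteratedDeriv_one]
  have h3 : iteratedDeriv 3 F = deriv (deriv (deriv F)) := by
    rw [iteratedDeriv_succ, h2]
  have hrel : ∀ w ∈ ball (0:ℂ) 1,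
      (γ:ℂ) * q w + (((δ:ℂ)-(γ:ℂ))/2) * w * deriv q w = dop γ δ F w := by
    intro w hw
    have hp2 : HasDerivAt (deriv F) (deriv (deriv F) w) w :=
      ((hA.deriv) w hw).differentiableAt.hasDerivAt
    have hp3 : HasDerivAt (deriv (deriv F)) (deriv (deriv (deriv F)) w) w :=
      ((hA.deriv.deriv) w hw).differentiableAt.hasDerivAt
    have hqd : HasDerivAt q
        (deriv (deriv F) w + (1 * deriv (deriv F) w + w * deriv (deriv (deriv F)) w)) w :=
      hp2.add ((hasDerivAt_id w).mul hp3)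
    rw [hqdef]
    simp only
    rw [hqd.deriv, dop, h2, h3]
    ring
  have hG : ∀ w ∈ ball (0:ℂ) 1,
      lam < ((γ:ℂ) * q w + (((δ:ℂ)-(γ:ℂ))/2) * w * deriv q w).re := by
    intro w hw
    rw [hrel w hw]
    exact hbd w hw
  have hqpos := myKey γ δ lam hlam hlg hgd q hqa hG
  have hmain : ∀ z ∈ ball (0:ℂ) 1, 0 < (deriv F z).re := by
    apply myAvg (deriv F) (hA.deriv)
    intro w hw
    exact hqpos w hw
  refine ⟨hmain, ?_, myNW F hA hmain⟩
  refine ⟨id, ⟨analyticOnNhd_id, injOn_id _, by rw [image_id]; exact convex_ball 0 1⟩, ?_⟩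
  intro z hz
  rw [deriv_id]
  simpa using hmain z hz
end

section
/- Let 0 ≤ λ < γ ≤ δ be real numbers. If f = s + conj(t) with s(z) = z + Σ_{m≥2} a_m z^m and t(z) = Σ_{m≥2} b_m z^m belongs to R_H⁰(γ,δ,λ), then for every m ≥ 2, | |a_m| − |b_m| | ≤ 4(γ−λ) / (m²[2γ + (δ−γ)(m−1)]). -/
open Complex Metric Set ComplexConjugate

section Helpers
open Filter

lemma ofScalars_coeff (c : ℕ → ℂ) (n : ℕ) :
    (FormalMultilinearSeries.ofScalars ℂ c).coeff n = c n := by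
  have h := FormalMultilinearSeries.ofScalars_apply_eq (E := ℂ) c (1 : ℂ) n
  simp only [FormalMultilinearSeries.coeff, Pi.one_def] at *
  rw [h]; simp

lemma hasFPS (c : ℕ → ℂ) (g : ℂ → ℂ)
    (hrep : ∀ z ∈ ball (0 : ℂ) 1, HasSum (fun k : ℕ => c k * z ^ k) (g z)) :
    HasFPowerSeriesOnBall g (FormalMultilinearSeries.ofScalars ℂ c) 0 1 := by
  set p := FormalMultilinearSeries.ofScalars ℂ c with hp
  have hrad : 1 ≤ p.radius := by
    refine ENNReal.le_of_forall_nnreal_lt (fun r hr => ?_)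
    have hr1 : (r : ℝ) < 1 := by exact_mod_cast hr
    have hz : ((r : ℝ) : ℂ) ∈ ball (0 : ℂ) 1 := by
      simp [mem_ball_zero_iff, Complex.norm_of_nonneg r.coe_nonneg, hr1]
    have hs := (hrep _ hz).summable.tendsto_atTop_zero
    refine p.le_radius_of_tendsto (l := 0) ?_
    have : (fun n => ‖p n‖ * (r : ℝ) ^ n) = fun n => ‖c n * ((r:ℝ):ℂ) ^ n‖ := by
      funext n
      rw [hp, FormalMultilinearSeries.ofScalars_norm]
      simp [norm_mul, norm_pow, Complex.norm_real, _root_.abs_of_nonneg r.coe_nonneg]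
    rw [this]
    simpa using hs.norm
  refine ⟨hrad, one_pos, ?_⟩
  intro y hy
  have hy' : y ∈ ball (0:ℂ) 1 := by
    rw [← ENNReal.coe_one, Metric.eball_coe, NNReal.coe_one] at hy; exact hy
  have h := hrep y hy'
  simp only [zero_add]
  convert h using 2 with n
  · rfl
  rw [hp, FormalMultilinearSeries.ofScalars_apply_eq, smul_eq_mul]

lemma coeff_eq (c : ℕ → ℂ) (g : ℂ → ℂ)
    (hrep : ∀ z ∈ ball (0 : ℂ) 1, HasSum (fun k : ℕ => c k * z ^ k) (g z)) (n : ℕ) :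
    iteratedDeriv n g 0 = (n.factorial : ℂ) * c n := by
  have h := (hasFPS c g hrep).factorial_smul (1 : ℂ) n
  rw [FormalMultilinearSeries.ofScalars_apply_eq] at h
  rw [iteratedDeriv_eq_iteratedFDeriv]
  rw [← h]
  simp [smul_eq_mul]

lemma hasSum_deriv (c : ℕ → ℂ) (g : ℂ → ℂ)
    (hrep : ∀ z ∈ ball (0 : ℂ) 1, HasSum (fun k : ℕ => c k * z ^ k) (g z)) :
    ∀ z ∈ ball (0 : ℂ) 1,
      HasSum (fun k : ℕ => ((k : ℂ) + 1) * c (k + 1) * z ^ k) (deriv g z) := by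
  intro z hz
  rcases eq_or_ne z 0 with rfl | hz0
  · have h0 : deriv g 0 = c 1 := by
      have := coeff_eq c g hrep 1
      rw [iteratedDeriv_one] at this
      simpa using this
    rw [h0]
    have h1 := hasSum_single (f := fun k : ℕ => ((k : ℂ) + 1) * c (k + 1) * (0:ℂ) ^ k) 0
      (by intro b hb; simp [zero_pow hb])
    simpa using h1
  · have hfd := (hasFPS c g hrep).fderiv
    have hz' : z ∈ Metric.eball (0:ℂ) 1 := by
      rw [← ENNReal.coe_one, Metric.eball_coe, NNReal.coe_one]
      exact hz
    have hsum := hfd.hasSum hz'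
    rw [zero_add] at hsum
    have hsum2 := hsum.mapL (ContinuousLinearMap.apply ℂ ℂ z)
    simp only [ContinuousLinearMap.apply_apply] at hsum2
    have hterm : ∀ n : ℕ, (FormalMultilinearSeries.ofScalars ℂ c).derivSeries n (fun _ => z) z
        = ((n : ℂ) + 1) * c (n + 1) * z ^ (n + 1) := by
      intro n
      rw [FormalMultilinearSeries.derivSeries_apply_diag,
        FormalMultilinearSeries.ofScalars_apply_eq]
      push_cast
      simp [smul_eq_mul]; ring
    have heval : fderiv ℂ g z z = z * deriv g z := by
      have : fderiv ℂ g z z = fderiv ℂ g z (z • (1:ℂ)) := by simp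
      rw [this, (fderiv ℂ g z).map_smul]
      rw [fderiv_apply_one_eq_deriv]; simp [smul_eq_mul]
    rw [funext hterm, heval] at hsum2
    have h2 := hsum2.mul_left z⁻¹
    have heq : (fun i : ℕ => z⁻¹ * (((i:ℂ) + 1) * c (i + 1) * z ^ (i + 1)))
        = fun i : ℕ => ((i:ℂ) + 1) * c (i + 1) * z ^ i := by
      funext i; field_simp [pow_succ]; ring
    rw [heq, inv_mul_cancel_left₀ hz0] at h2
    exact h2

open MeasureTheory intervalIntegral in
lemma char_integral (m : ℤ) :
    (∫ θ : ℝ in Ioc (0:ℝ) (2*Real.pi), Complex.exp (m * θ * I))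
      = if m = 0 then (2*Real.pi : ℂ) else 0 := by
  rw [← intervalIntegral.integral_of_le (by positivity : (0:ℝ) ≤ 2*Real.pi)]
  rcases eq_or_ne m 0 with rfl | hm
  · simp
  · rw [if_neg hm]
    have hc : (m : ℂ) * I ≠ 0 := by
      simp [Complex.ext_iff, hm]
    have hfun : (fun θ : ℝ => Complex.exp (m * θ * I))
        = fun θ : ℝ => Complex.exp ((m * I) * θ) := by
      funext θ; ring_nf
    rw [hfun, integral_exp_mul_complex hc]
    have h1 : (m : ℂ) * I * ((2*Real.pi : ℝ) : ℂ) = m * (2 * Real.pi * I) := by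
      push_cast; ring
    rw [h1, Complex.exp_int_mul_two_pi_mul_I]
    simp

open MeasureTheory in
lemma circ_hasSum (e : ℕ → ℂ) (H : ℂ → ℂ)
    (hrep : ∀ z ∈ ball (0:ℂ) 1, HasSum (fun k : ℕ => e k * z^k) (H z))
    {r : ℝ} (hr0 : 0 < r) (hr1 : r < 1) (l : ℤ) :
    HasSum (fun k : ℕ => e k * (r:ℂ)^k * (if (k:ℤ) + l = 0 then (2*Real.pi:ℂ) else 0))
      (∫ θ in Ioc (0:ℝ) (2*Real.pi),
        H ((r:ℂ) * Complex.exp (θ * I)) * Complex.exp (l * θ * I)) := by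
  have hφ : ∀ θ : ℝ, (r:ℂ) * Complex.exp (θ * I) ∈ ball (0:ℂ) 1 := by
    intro θ
    rw [mem_ball_zero_iff]
    rw [norm_mul]
    simp only [Complex.norm_real, Real.norm_eq_abs]
    rw [_root_.abs_of_nonneg hr0.le]
    have : ‖Complex.exp (θ * I)‖ = 1 := by
      rw [Complex.norm_exp]
      simp
    rw [this, mul_one]; exact hr1
  set F : ℕ → ℝ → ℂ := fun k θ =>
    e k * ((r:ℂ) * Complex.exp (θ * I))^k * Complex.exp (l * θ * I) with hF
  have hcont : ∀ k, Continuous (F k) := by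
    intro k
    apply Continuous.mul
    · apply Continuous.mul continuous_const
      apply Continuous.pow
      exact continuous_const.mul (Complex.continuous_exp.comp (by continuity))
    · exact Complex.continuous_exp.comp (by continuity)
  have hF_int : ∀ k, Integrable (F k) (volume.restrict (Ioc (0:ℝ) (2*Real.pi))) :=
    fun k => ((hcont k).integrableOn_Ioc).integrable
  have hnorm : ∀ k θ, ‖F k θ‖ = ‖e k‖ * r ^ k := by
    intro k θ
    rw [hF]
    simp only [norm_mul, norm_pow, Complex.norm_exp]
    have h1 : ((l:ℂ) * θ * I).re = 0 := by simp
    have h2 : ((θ:ℂ) * I).re = 0 := by simp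
    rw [h1, h2]
    simp [Complex.norm_real, _root_.abs_of_nonneg hr0.le]
  have hsum_norm : Summable fun k => ‖e k‖ * r ^ k := by
    have hps := hasFPS e H hrep
    set r' : NNReal := ⟨r, hr0.le⟩ with hr'
    have hlt : (r' : ENNReal) < (FormalMultilinearSeries.ofScalars ℂ e).radius := by
      refine lt_of_lt_of_le ?_ hps.r_le
      exact_mod_cast (by exact_mod_cast hr1 : (r' : ENNReal) < 1)
    have hs := (FormalMultilinearSeries.ofScalars ℂ e).summable_norm_mul_pow hlt
    have heq : (fun n => ‖(FormalMultilinearSeries.ofScalars ℂ e) n‖ * (r':ℝ) ^ n)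
        = fun n => ‖e n‖ * r ^ n := by
      funext n
      rw [FormalMultilinearSeries.ofScalars_norm]
      rfl
    rwa [heq] at hs
  have hF_sum : Summable fun k =>
      ∫ θ, ‖F k θ‖ ∂(volume.restrict (Ioc (0:ℝ) (2*Real.pi))) := by
    have : ∀ k, (∫ θ, ‖F k θ‖ ∂(volume.restrict (Ioc (0:ℝ) (2*Real.pi))))
        = (‖e k‖ * r ^ k) * (2*Real.pi) := by
      intro k
      simp only [hnorm]
      rw [integral_const]
      simp [Real.volume_Ioc, Real.pi_nonneg, smul_eq_mul, mul_comm,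
        ENNReal.toReal_ofReal (by positivity : (0:ℝ) ≤ 2*Real.pi)]
    rw [funext this]
    exact hsum_norm.mul_right _
  have key := hasSum_integral_of_summable_integral_norm hF_int hF_sum
  have htsum : (fun θ : ℝ => ∑' k, F k θ)
      = fun θ : ℝ => H ((r:ℂ) * Complex.exp ((θ:ℂ) * I)) * Complex.exp ((l:ℂ) * θ * I) := by
    funext θ
    exact ((hrep _ (hφ θ)).mul_right _).tsum_eq
  rw [htsum] at key
  have hint : ∀ k, (∫ θ, F k θ ∂(volume.restrict (Ioc (0:ℝ) (2*Real.pi))))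
      = e k * (r:ℂ)^k * (if (k:ℤ) + l = 0 then (2*Real.pi:ℂ) else 0) := by
    intro k
    have hfk : F k = fun θ : ℝ =>
        (e k * (r:ℂ)^k) * Complex.exp ((((k:ℤ) + l) : ℤ) * θ * I) := by
      funext θ
      rw [hF]
      simp only [mul_pow, ← Complex.exp_nat_mul]
      rw [mul_assoc, mul_assoc, ← Complex.exp_add]
      rw [show ((k:ℂ)) * ((θ:ℂ) * I) + (l:ℂ) * (θ:ℂ) * I
          = ((((k:ℤ) + l : ℤ)):ℂ) * (θ:ℂ) * I by push_cast; ring]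
      ring
    rw [hfk, MeasureTheory.integral_const_mul, char_integral, mul_assoc]
  rw [funext hint] at key
  exact key

open MeasureTheory in
lemma cara (e : ℕ → ℂ) (H : ℂ → ℂ)
    (hrep : ∀ z ∈ ball (0:ℂ) 1, HasSum (fun k : ℕ => e k * z^k) (H z))
    (hRe : ∀ z ∈ ball (0:ℂ) 1, 0 ≤ (H z).re) (n : ℕ) (hn : 1 ≤ n) :
    ‖e n‖ ≤ 2 * (e 0).re := by
  have hπ : (0:ℝ) < 2 * Real.pi := by positivity
  have hφ : ∀ (r : ℝ), 0 < r → r < 1 → ∀ θ : ℝ,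
      (r:ℂ) * Complex.exp ((θ:ℂ) * I) ∈ ball (0:ℂ) 1 := by
    intro r hr0 hr1 θ
    rw [mem_ball_zero_iff, norm_mul]
    have h2 : ‖Complex.exp ((θ:ℂ) * I)‖ = 1 := by
      rw [Complex.norm_exp]; simp
    rw [h2, mul_one]
    simpa [Complex.norm_real, Real.norm_eq_abs, _root_.abs_of_nonneg hr0.le] using hr1
  have hbound : ∀ r : ℝ, 0 < r → r < 1 → ‖e n‖ * r ^ n ≤ 2 * (e 0).re := by
    intro r hr0 hr1
    have h1 := circ_hasSum e H hrep hr0 hr1 (-(n:ℤ))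
    have h2 := circ_hasSum e H hrep hr0 hr1 ((n:ℤ))
    have h3 := circ_hasSum e H hrep hr0 hr1 0
    -- evaluate the three sums
    have e1 : (∫ θ in Ioc (0:ℝ) (2*Real.pi),
        H ((r:ℂ) * Complex.exp (θ * I)) * Complex.exp ((-(n:ℤ) : ℤ) * θ * I))
        = e n * (r:ℂ)^n * (2*Real.pi) := by
      have hs := hasSum_single (f := fun k : ℕ =>
          e k * (r:ℂ)^k * (if (k:ℤ) + (-(n:ℤ)) = 0 then (2*Real.pi:ℂ) else 0)) n
        (by intro b hb
            simp only [if_neg (by omega : ¬(((b:ℤ)) + (-(n:ℤ)) = 0)), mul_zero])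
      have := h1.unique hs
      rw [this]
      simp
    have e2 : (∫ θ in Ioc (0:ℝ) (2*Real.pi),
        H ((r:ℂ) * Complex.exp (θ * I)) * Complex.exp (((n:ℤ) : ℤ) * θ * I)) = 0 := by
      have hz : (fun k : ℕ =>
          e k * (r:ℂ)^k * (if (k:ℤ) + (n:ℤ) = 0 then (2*Real.pi:ℂ) else 0))
          = fun _ => (0:ℂ) := by
        funext k
        have : ((k:ℤ)) + (n:ℤ) ≠ 0 := by omega
        simp [this]
      rw [hz] at h2
      exact h2.unique hasSum_zero
    have e3 : (∫ θ in Ioc (0:ℝ) (2*Real.pi),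
        H ((r:ℂ) * Complex.exp (θ * I)) * Complex.exp ((0 : ℤ) * θ * I))
        = e 0 * (2*Real.pi) := by
      have hs := hasSum_single (f := fun k : ℕ =>
          e k * (r:ℂ)^k * (if (k:ℤ) + 0 = 0 then (2*Real.pi:ℂ) else 0)) 0
        (by intro b hb
            simp only [if_neg (by omega : ¬(((b:ℤ)) + 0 = 0)), mul_zero])
      have := h3.unique hs
      rw [this]
      simp
    -- continuity and integrability
    have hHcont : Continuous fun θ : ℝ => H ((r:ℂ) * Complex.exp ((θ:ℂ) * I)) := by
      have hcOn : ContinuousOn H (Metric.eball (0:ℂ) 1) :=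
        (hasFPS e H hrep).continuousOn
      refine hcOn.comp_continuous (continuous_const.mul
        (Complex.continuous_exp.comp (Complex.continuous_ofReal.mul continuous_const)))
        (fun θ => ?_)
      rw [← ENNReal.coe_one, Metric.eball_coe, NNReal.coe_one]
      exact hφ r hr0 hr1 θ
    have hexpc : Continuous fun θ : ℝ => Complex.exp ((-(n:ℤ) : ℂ) * (θ:ℂ) * I) :=
      Complex.continuous_exp.comp
        ((continuous_const.mul Complex.continuous_ofReal).mul continuous_const)
    have hint1 : Integrable (fun θ : ℝ =>
        H ((r:ℂ) * Complex.exp ((θ:ℂ) * I)) * Complex.exp ((-(n:ℤ) : ℂ) * (θ:ℂ) * I))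
        (volume.restrict (Ioc (0:ℝ) (2*Real.pi))) :=
      ((hHcont.mul hexpc).integrableOn_Ioc).integrable
    have hint2 : Integrable (fun θ : ℝ =>
        (starRingEnd ℂ) (H ((r:ℂ) * Complex.exp ((θ:ℂ) * I))) *
          Complex.exp ((-(n:ℤ) : ℂ) * (θ:ℂ) * I))
        (volume.restrict (Ioc (0:ℝ) (2*Real.pi))) :=
      (((Complex.continuous_conj.comp hHcont).mul hexpc).integrableOn_Ioc).integrable
    -- conjugate of e2
    have hconj : (∫ θ in Ioc (0:ℝ) (2*Real.pi),
        (starRingEnd ℂ) (H ((r:ℂ) * Complex.exp ((θ:ℂ) * I))) *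
          Complex.exp ((-(n:ℤ) : ℂ) * (θ:ℂ) * I)) = 0 := by
      have hptw : (fun θ : ℝ =>
          (starRingEnd ℂ) (H ((r:ℂ) * Complex.exp ((θ:ℂ) * I))) *
            Complex.exp ((-(n:ℤ) : ℂ) * (θ:ℂ) * I))
          = fun θ : ℝ => (starRingEnd ℂ)
              (H ((r:ℂ) * Complex.exp ((θ:ℂ) * I)) * Complex.exp (((n:ℤ) : ℂ) * (θ:ℂ) * I)) := by
        funext θ
        rw [map_mul, ← Complex.exp_conj]
        congr 2
        simp [Complex.ext_iff]
      rw [hptw, integral_conj]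
      push_cast at e2 ⊢
      rw [e2]
      simp
    -- combine
    have hcomb : (∫ θ in Ioc (0:ℝ) (2*Real.pi),
        (2 * ((H ((r:ℂ) * Complex.exp ((θ:ℂ) * I))).re : ℂ)) *
          Complex.exp ((-(n:ℤ) : ℂ) * (θ:ℂ) * I))
        = e n * (r:ℂ)^n * (2*Real.pi) := by
      have hptw : ∀ θ : ℝ, (2 * ((H ((r:ℂ) * Complex.exp ((θ:ℂ) * I))).re : ℂ)) *
          Complex.exp ((-(n:ℤ) : ℂ) * (θ:ℂ) * I)
          = H ((r:ℂ) * Complex.exp ((θ:ℂ) * I)) * Complex.exp ((-(n:ℤ) : ℂ) * (θ:ℂ) * I)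
            + (starRingEnd ℂ) (H ((r:ℂ) * Complex.exp ((θ:ℂ) * I))) *
              Complex.exp ((-(n:ℤ) : ℂ) * (θ:ℂ) * I) := by
        intro θ
        rw [← add_mul]
        congr 1
        rw [Complex.add_conj]
        push_cast
        ring
      calc (∫ θ in Ioc (0:ℝ) (2*Real.pi),
          (2 * ((H ((r:ℂ) * Complex.exp ((θ:ℂ) * I))).re : ℂ)) *
            Complex.exp ((-(n:ℤ) : ℂ) * (θ:ℂ) * I))
          = (∫ θ in Ioc (0:ℝ) (2*Real.pi),
            (H ((r:ℂ) * Complex.exp ((θ:ℂ) * I)) * Complex.exp ((-(n:ℤ) : ℂ) * (θ:ℂ) * I)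
            + (starRingEnd ℂ) (H ((r:ℂ) * Complex.exp ((θ:ℂ) * I))) *
              Complex.exp ((-(n:ℤ) : ℂ) * (θ:ℂ) * I))) := by
            apply MeasureTheory.integral_congr_ae
            exact Filter.Eventually.of_forall (fun θ => hptw θ)
        _ = e n * (r:ℂ)^n * (2*Real.pi) := by
            rw [MeasureTheory.integral_add hint1 hint2, hconj, add_zero]
            push_cast at e1 ⊢
            exact e1
    -- take norms
    have hnorm_le : ‖e n‖ * r ^ n * (2*Real.pi) ≤ 2 * (e 0).re * (2*Real.pi) := by
      have lhs_eq : ‖e n * (r:ℂ)^n * (2 * (Real.pi:ℂ))‖ = ‖e n‖ * r ^ n * (2*Real.pi) := by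
        rw [show (2 * (Real.pi:ℂ)) = ((2*Real.pi : ℝ):ℂ) by push_cast; ring,
          norm_mul, norm_mul, norm_pow, Complex.norm_real, Complex.norm_real,
          Real.norm_eq_abs, Real.norm_eq_abs, _root_.abs_of_nonneg hr0.le,
          _root_.abs_of_nonneg hπ.le]
      have step1 : ‖e n * (r:ℂ)^n * (2 * (Real.pi:ℂ))‖ ≤
          ∫ θ in Ioc (0:ℝ) (2*Real.pi),
            ‖(2 * ((H ((r:ℂ) * Complex.exp ((θ:ℂ) * I))).re : ℂ)) *
              Complex.exp ((-(n:ℤ) : ℂ) * (θ:ℂ) * I)‖ := by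
        have := norm_integral_le_integral_norm (μ := volume.restrict (Ioc (0:ℝ) (2*Real.pi)))
          (f := fun θ : ℝ => (2 * ((H ((r:ℂ) * Complex.exp ((θ:ℂ) * I))).re : ℂ)) *
            Complex.exp ((-(n:ℤ) : ℂ) * (θ:ℂ) * I))
        rw [hcomb] at this
        exact this
      have hnormptw : ∀ θ : ℝ, ‖(2 * ((H ((r:ℂ) * Complex.exp ((θ:ℂ) * I))).re : ℂ)) *
          Complex.exp ((-(n:ℤ) : ℂ) * (θ:ℂ) * I)‖
          = 2 * (H ((r:ℂ) * Complex.exp ((θ:ℂ) * I))).re := by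
        intro θ
        rw [norm_mul, norm_mul]
        have h2 : ‖Complex.exp ((-(n:ℤ) : ℂ) * (θ:ℂ) * I)‖ = 1 := by
          rw [Complex.norm_exp]
          simp [Complex.mul_re, Complex.mul_im]
        rw [h2, mul_one]
        simp [Complex.norm_real, Real.norm_eq_abs,
          _root_.abs_of_nonneg (hRe _ (hφ r hr0 hr1 θ))]
      have step2 : (∫ θ in Ioc (0:ℝ) (2*Real.pi),
          ‖(2 * ((H ((r:ℂ) * Complex.exp ((θ:ℂ) * I))).re : ℂ)) *
            Complex.exp ((-(n:ℤ) : ℂ) * (θ:ℂ) * I)‖)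
          = 2 * (e 0).re * (2*Real.pi) := by
        rw [funext hnormptw]
        have hreint : Integrable (fun θ : ℝ => H ((r:ℂ) * Complex.exp ((θ:ℂ) * I)))
            (volume.restrict (Ioc (0:ℝ) (2*Real.pi))) :=
          (hHcont.integrableOn_Ioc).integrable
        have hre := integral_re hreint
        simp only [RCLike.re_to_complex] at hre
        rw [MeasureTheory.integral_const_mul, hre]
        have : (∫ θ in Ioc (0:ℝ) (2*Real.pi), H ((r:ℂ) * Complex.exp ((θ:ℂ) * I)))
            = e 0 * (2*Real.pi) := by
          have := e3
          push_cast at this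
          simpa using this
        rw [this]
        simp [Complex.mul_re, Complex.ofReal_mul]
        ring
      calc ‖e n‖ * r ^ n * (2*Real.pi) = ‖e n * (r:ℂ)^n * (2 * (Real.pi:ℂ))‖ := lhs_eq.symm
        _ ≤ _ := step1
        _ = 2 * (e 0).re * (2*Real.pi) := step2
    have := (mul_le_mul_iff_left₀ hπ).mp hnorm_le
    exact this
  -- limit r → 1
  have ht : Filter.Tendsto (fun r : ℝ => ‖e n‖ * r ^ n)
      (nhdsWithin 1 (Iio 1)) (nhds (‖e n‖)) := by
    have hc : Filter.Tendsto (fun r : ℝ => ‖e n‖ * r ^ n) (nhds 1) (nhds (‖e n‖ * 1 ^ n)) :=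
      (continuous_const.mul (continuous_pow n)).tendsto 1
    simpa using hc.mono_left nhdsWithin_le_nhds
  refine le_of_tendsto ht ?_
  filter_upwards [Ioo_mem_nhdsLT_of_mem (by norm_num : (1:ℝ) ∈ Ioc 0 1)] with r hr
  exact hbound r hr.1 hr.2

noncomputable def Dcoef (c : ℕ → ℂ) : ℕ → ℂ := fun k => ((k:ℂ) + 1) * c (k + 1)

def shift1 (f : ℕ → ℂ) : ℕ → ℂ := fun k => match k with | 0 => 0 | (k+1) => f k

noncomputable def Ecoef (γ δ : ℝ) (c : ℕ → ℂ) : ℕ → ℂ := fun k =>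
  (γ:ℂ) * Dcoef c k + (δ:ℂ) * shift1 (Dcoef (Dcoef c)) k
    + (((δ:ℂ) - (γ:ℂ))/2) * shift1 (shift1 (Dcoef (Dcoef (Dcoef c)))) k

lemma rep_shift (f : ℕ → ℂ) (G : ℂ → ℂ)
    (h : ∀ z ∈ ball (0:ℂ) 1, HasSum (fun k : ℕ => f k * z ^ k) (G z)) :
    ∀ z ∈ ball (0:ℂ) 1, HasSum (fun k : ℕ => shift1 f k * z ^ k) (z * G z) := by
  intro z hz
  have h1 := (h z hz).mul_left z
  have h2 : HasSum (fun n : ℕ => shift1 f (n+1) * z^(n+1))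
      (z * G z - ∑ i ∈ Finset.range 1, shift1 f i * z^i) := by
    have heq : (fun n : ℕ => shift1 f (n+1) * z^(n+1)) = fun n => z * (f n * z^n) := by
      funext n
      show f n * z^(n+1) = _
      ring
    rw [heq]
    simpa [shift1] using h1
  exact (hasSum_nat_add_iff' 1).mp h2

lemma rep_dop (γ δ : ℝ) (c : ℕ → ℂ) (g : ℂ → ℂ)
    (hrep : ∀ z ∈ ball (0:ℂ) 1, HasSum (fun k : ℕ => c k * z ^ k) (g z)) :
    ∀ z ∈ ball (0:ℂ) 1, HasSum (fun k : ℕ => Ecoef γ δ c k * z ^ k) (dop γ δ g z) := by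
  intro z hz
  have r1 := hasSum_deriv c g hrep
  have r1' : ∀ w ∈ ball (0:ℂ) 1, HasSum (fun k : ℕ => Dcoef c k * w ^ k) (deriv g w) := by
    intro w hw; exact r1 w hw
  have r2 := hasSum_deriv _ _ r1'
  have r2' : ∀ w ∈ ball (0:ℂ) 1, HasSum (fun k : ℕ => Dcoef (Dcoef c) k * w ^ k)
      (deriv (deriv g) w) := by
    intro w hw; exact r2 w hw
  have r3 := hasSum_deriv _ _ r2'
  have r3' : ∀ w ∈ ball (0:ℂ) 1, HasSum (fun k : ℕ => Dcoef (Dcoef (Dcoef c)) k * w ^ k)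
      (deriv (deriv (deriv g)) w) := by
    intro w hw; exact r3 w hw
  have s2 := rep_shift _ _ r2'
  have s3' := rep_shift _ _ r3'
  have s3 := rep_shift _ _ s3'
  have h2fun : iteratedDeriv 2 g = deriv (deriv g) := by
    rw [iteratedDeriv_succ, iteratedDeriv_one]
  have h3fun : iteratedDeriv 3 g = deriv (deriv (deriv g)) := by
    rw [iteratedDeriv_succ, iteratedDeriv_succ, iteratedDeriv_one]
  have hsum := ((r1' z hz).mul_left (γ:ℂ)).add
    (((s2 z hz).mul_left (δ:ℂ)).add ((s3 z hz).mul_left (((δ:ℂ) - (γ:ℂ))/2)))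
  have hterm : (fun k : ℕ => (γ:ℂ) * (Dcoef c k * z ^ k)
      + ((δ:ℂ) * (shift1 (Dcoef (Dcoef c)) k * z ^ k)
        + (((δ:ℂ) - (γ:ℂ))/2) * (shift1 (shift1 (Dcoef (Dcoef (Dcoef c)))) k * z ^ k)))
      = fun k : ℕ => Ecoef γ δ c k * z ^ k := by
    funext k
    rw [Ecoef]
    ring
  rw [hterm] at hsum
  have hval : (γ:ℂ) * deriv g z + ((δ:ℂ) * (z * deriv (deriv g) z)
      + (((δ:ℂ) - (γ:ℂ))/2) * (z * (z * deriv (deriv (deriv g)) z))) = dop γ δ g z := by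
    rw [dop, h2fun, h3fun]
    ring
  rwa [hval] at hsum

end Helpers

/-- Coefficient bound: ||a_m| − |b_m|| ≤ 4(γ−λ)/(m²[2γ+(δ−γ)(m−1)]). -/
theorem stmt5 (γ δ lam : ℝ) (hlam : 0 ≤ lam) (hlg : lam < γ) (hgd : γ ≤ δ)
    (s t : ℂ → ℂ) (a b : ℕ → ℂ)
    (ha0 : a 0 = 0) (ha1 : a 1 = 1) (hb0 : b 0 = 0) (hb1 : b 1 = 0)
    (hsrep : ∀ z ∈ ball (0 : ℂ) 1, HasSum (fun m : ℕ => a m * z ^ m) (s z))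
    (htrep : ∀ z ∈ ball (0 : ℂ) 1, HasSum (fun m : ℕ => b m * z ^ m) (t z))
    (hf : MemRH0 γ δ lam s t) (m : ℕ) (hm : 2 ≤ m) :
    |‖a m‖ - ‖b m‖| ≤ 4 * (γ - lam) / ((m : ℝ) ^ 2 * (2 * γ + (δ - γ) * ((m : ℝ) - 1))) := by
  obtain ⟨⟨hsA, htA, hs0, hs1, ht0, ht1⟩, hineq⟩ := hf
  have hγpos : (0:ℝ) < γ := lt_of_le_of_lt hlam hlg
  have hds := rep_dop γ δ a s hsrep
  have hdt := rep_dop γ δ b t htrep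
  set E : ℕ → ℂ := fun k => Ecoef γ δ a k + Ecoef γ δ b k
    - (if k = 0 then (lam:ℂ) else 0) with hE
  have hHrep : ∀ z ∈ ball (0:ℂ) 1, HasSum (fun k : ℕ => E k * z^k)
      (dop γ δ s z + dop γ δ t z - (lam:ℂ)) := by
    intro z hz
    have h1 := (hds z hz).add (hdt z hz)
    have h2 : HasSum (fun k : ℕ => (if k = 0 then (lam:ℂ) else 0) * z^k) (lam:ℂ) := by
      have hsingle := hasSum_single
        (f := fun k : ℕ => (if k = 0 then (lam:ℂ) else 0) * z^k) 0
        (by intro b hb; simp [hb])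
      simpa using hsingle
    have h3 := h1.sub h2
    have heq : (fun k : ℕ => (Ecoef γ δ a k * z^k + Ecoef γ δ b k * z^k)
        - (if k = 0 then (lam:ℂ) else 0) * z^k) = fun k : ℕ => E k * z^k := by
      funext k; rw [hE]; ring
    rwa [heq] at h3
  have hRe : ∀ z ∈ ball (0:ℂ) 1, 0 ≤ (dop γ δ s z + dop γ δ t z - (lam:ℂ)).re := by
    intro z hz
    have h := hineq z hz
    have h2 : -‖dop γ δ t z‖ ≤ (dop γ δ t z).re :=
      (abs_le.mp (Complex.abs_re_le_norm (dop γ δ t z))).1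
    have h' : ‖dop γ δ t z‖ < (dop γ δ s z - (lam:ℂ)).re := by
      simpa using h
    simp only [Complex.add_re, Complex.sub_re, Complex.ofReal_re] at h' ⊢
    linarith
  obtain ⟨j, rfl⟩ : ∃ j, m = j + 2 := ⟨m - 2, by omega⟩
  have hcara := cara E _ hHrep hRe (j+1) (by omega)
  have hE0 : E 0 = ((γ - lam : ℝ):ℂ) := by
    rw [hE]
    simp only [if_pos rfl, Ecoef, Dcoef, shift1, ha1, hb1]
    push_cast
    ring
  set Areal : ℝ := γ*((j:ℝ)+2) + δ*((j:ℝ)+1)*((j:ℝ)+2)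
    + ((δ-γ)/2)*(j:ℝ)*((j:ℝ)+1)*((j:ℝ)+2) with hAreal
  have hEm : E (j+1) = ((Areal:ℝ):ℂ) * (a (j+2) + b (j+2)) := by
    rw [hE]
    cases j with
    | zero =>
      simp only [if_neg (Nat.succ_ne_zero 0), Ecoef, Dcoef, shift1, hAreal]
      push_cast
      ring
    | succ i =>
      simp only [if_neg (Nat.succ_ne_zero (i+1)), Ecoef, Dcoef, shift1, hAreal]
      push_cast
      ring
  have hApos : 0 < Areal := by
    rw [hAreal]
    have h1 : (0:ℝ) ≤ (j:ℝ) := Nat.cast_nonneg j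
    have hδ : (0:ℝ) < δ := lt_of_lt_of_le hγpos hgd
    have t1 : (0:ℝ) < γ*((j:ℝ)+2) := by positivity
    have t2 : (0:ℝ) ≤ δ*((j:ℝ)+1)*((j:ℝ)+2) := by positivity
    have t3 : (0:ℝ) ≤ ((δ-γ)/2)*(j:ℝ)*((j:ℝ)+1)*((j:ℝ)+2) := by
      apply mul_nonneg
      apply mul_nonneg
      apply mul_nonneg
      · linarith
      · exact h1
      · linarith
      · linarith
    linarith
  have hnormE : ‖E (j+1)‖ = Areal * ‖a (j+2) + b (j+2)‖ := by
    rw [hEm, norm_mul, Complex.norm_real, Real.norm_eq_abs, _root_.abs_of_nonneg hApos.le]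
  have hre0 : (E 0).re = γ - lam := by rw [hE0]; simp
  rw [hnormE, hre0] at hcara
  have habs : |‖a (j+2)‖ - ‖b (j+2)‖| ≤ ‖a (j+2) + b (j+2)‖ := by
    have h := abs_norm_sub_norm_le (a (j+2)) (-(b (j+2)))
    simpa [sub_neg_eq_add] using h
  have hden : ((j+2 : ℕ) : ℝ) ^ 2 * (2 * γ + (δ - γ) * (((j+2 : ℕ) : ℝ) - 1))
      = 2 * Areal := by
    push_cast
    rw [hAreal]
    ring
  rw [hden]
  have hdenpos : (0:ℝ) < 2 * Areal := by linarith
  rw [le_div_iff₀ hdenpos]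
  calc |‖a (j+2)‖ - ‖b (j+2)‖| * (2 * Areal)
      ≤ ‖a (j+2) + b (j+2)‖ * (2 * Areal) := by
        apply mul_le_mul_of_nonneg_right habs hdenpos.le
    _ ≤ 4 * (γ - lam) := by nlinarith [norm_nonneg (a (j+2) + b (j+2))]
end

section
/- Let 0 ≤ λ < γ ≤ δ be real numbers. Let f = s + conj(t) ∈ H⁰ with s(z) = z + Σ_{m≥2} a_m z^m and t(z) = Σ_{m≥2} b_m z^m. If Σ_{m≥2} m²[2γ + (δ−γ)(m−1)](|a_m| + |b_m|) ≤ 2(γ−λ), then f is stable harmonic close-to-convex in U; that is, for every ε with |ε| = 1 the harmonic mapping s + ε·conj(t) is close-to-convex in U. -/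
open Complex Metric Set ComplexConjugate

/-- The closed half-line emanating from `a` in direction `v`. -/
def RayFrom (a v : ℂ) : Set ℂ := {w | ∃ r : ℝ, 0 ≤ r ∧ w = a + r * v}

/-- A set is a close-to-convex domain if its complement is a union of pairwise
non-crossing (disjoint) half-lines. -/
def IsCTCDomain (Ω : Set ℂ) : Prop :=
  ∃ P : Set (ℂ × ℂ), (∀ p ∈ P, p.2 ≠ 0) ∧
    Ωᶜ = ⋃ p ∈ P, RayFrom p.1 p.2 ∧
    ∀ p ∈ P, ∀ q ∈ P, p ≠ q → Disjoint (RayFrom p.1 p.2) (RayFrom q.1 q.2)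

lemma norm_hasSum_le {f : ℕ → ℂ} {x : ℂ} {g : ℕ → ℝ} (h : HasSum f x) (hg : Summable g)
    (hfg : ∀ m, ‖f m‖ ≤ g m) : ‖x‖ ≤ ∑' m, g m := by
  have hs : Summable (fun m => ‖f m‖) :=
    Summable.of_nonneg_of_le (fun m => norm_nonneg _) hfg hg
  calc ‖x‖ = ‖∑' m, f m‖ := by rw [h.tsum_eq]
    _ ≤ ∑' m, ‖f m‖ := norm_tsum_le_tsum_norm hs
    _ ≤ ∑' m, g m := hs.tsum_le_tsum hfg hg

lemma shiftSum {c : ℕ → ℂ} {z S : ℂ} (h : HasSum (fun m => c m * z ^ m) S) :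
    HasSum (fun m => c (m + 2) * z ^ (m + 2)) (S - (c 0 + c 1 * z)) := by
  have h2 := (hasSum_nat_add_iff' (f := fun m => c m * z ^ m) 2).2 h
  have he : ∑ i ∈ Finset.range 2, c i * z ^ i = c 0 + c 1 * z := by
    simp [Finset.sum_range_succ]
  rwa [he] at h2


lemma norm_pow_sub_pow_le (z₁ z₂ : ℂ) (h1 : ‖z₁‖ ≤ 1) (h2 : ‖z₂‖ ≤ 1) (n : ℕ) :
    ‖z₁ ^ n - z₂ ^ n‖ ≤ n * ‖z₁ - z₂‖ := by
  induction n with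
  | zero => simp
  | succ n ih =>
    have key : z₁ ^ (n + 1) - z₂ ^ (n + 1) = z₁ ^ n * (z₁ - z₂) + (z₁ ^ n - z₂ ^ n) * z₂ := by
      ring
    have h3 : ‖z₁ ^ n * (z₁ - z₂)‖ ≤ ‖z₁ - z₂‖ := by
      rw [norm_mul, norm_pow]
      have : ‖z₁‖ ^ n ≤ 1 := pow_le_one₀ (norm_nonneg _) h1
      nlinarith [norm_nonneg (z₁ - z₂)]
    have h4 : ‖(z₁ ^ n - z₂ ^ n) * z₂‖ ≤ n * ‖z₁ - z₂‖ := by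
      rw [norm_mul]
      calc ‖z₁ ^ n - z₂ ^ n‖ * ‖z₂‖ ≤ (n * ‖z₁ - z₂‖) * 1 :=
            mul_le_mul ih h2 (norm_nonneg _) (by positivity)
        _ = n * ‖z₁ - z₂‖ := by ring
    calc ‖z₁ ^ (n + 1) - z₂ ^ (n + 1)‖ ≤ ‖z₁ ^ n * (z₁ - z₂)‖ + ‖(z₁ ^ n - z₂ ^ n) * z₂‖ := by
          rw [key]; exact norm_add_le _ _
      _ ≤ ‖z₁ - z₂‖ + n * ‖z₁ - z₂‖ := add_le_add h3 h4
      _ = (n + 1 : ℕ) * ‖z₁ - z₂‖ := by push_cast; ring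

lemma one_sub_pow_le' (ρ : ℝ) (h0 : 0 ≤ ρ) (h1 : ρ ≤ 1) (n : ℕ) : 1 - ρ ^ n ≤ n * (1 - ρ) := by
  induction n with
  | zero => simp
  | succ n ih =>
    have h2 : ρ ^ n ≤ 1 := pow_le_one₀ h0 h1
    have : 1 - ρ ^ (n + 1) = (1 - ρ) + ρ * (1 - ρ ^ n) := by ring
    rw [this]
    have : ρ * (1 - ρ ^ n) ≤ 1 * (n * (1 - ρ)) := by
      apply mul_le_mul h1 ih (by linarith) (by norm_num)
    push_cast; nlinarith

/-- Core geometric lemma. -/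
lemma geomMain (F : ℂ → ℂ) (hF0 : F 0 = 0)
    (happ : ∀ z₁ ∈ ball (0:ℂ) 1, ∀ z₂ ∈ ball (0:ℂ) 1,
      ‖F z₁ - F z₂ - (z₁ - z₂)‖ ≤ 1 / 2 * ‖z₁ - z₂‖)
    (hrho : ∀ z ∈ ball (0:ℂ) 1, ∀ ρ : ℝ, 0 ≤ ρ → ρ ≤ 1 →
      ‖(ρ:ℂ) * F z - F ((ρ:ℂ) * z)‖ ≤ (1 - ρ) / 4) :
    InjOn F (ball (0:ℂ) 1) ∧ IsCTCDomain (F '' ball (0:ℂ) 1) := by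
  set Ω : Set ℂ := F '' ball (0:ℂ) 1 with hΩ
  -- injectivity
  have hinj : InjOn F (ball (0:ℂ) 1) := by
    intro z₁ h₁ z₂ h₂ he
    have h := happ z₁ h₁ z₂ h₂
    rw [he, sub_self, zero_sub, norm_neg] at h
    have h0 : ‖z₁ - z₂‖ = 0 := by linarith [norm_nonneg (z₁ - z₂)]
    exact sub_eq_zero.1 (norm_eq_zero.1 h0)
  refine ⟨hinj, ?_⟩
  -- surjectivity onto small closed balls via the contraction mapping principle
  have hsurj : ∀ (bc : ℂ) (er : ℝ), 0 ≤ er → ‖bc‖ + er < 1 →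
      ∀ y : ℂ, ‖y - F bc‖ ≤ er / 2 → y ∈ Ω := by
    intro bc er her hlt y hy
    set φ : ℂ → ℂ := fun z => z - F z + y with hφ
    have hsub : closedBall bc er ⊆ ball (0:ℂ) 1 := by
      intro z hz
      rw [mem_closedBall, dist_eq_norm] at hz
      rw [mem_ball_zero_iff]
      calc ‖z‖ = ‖(z - bc) + bc‖ := by ring_nf
        _ ≤ ‖z - bc‖ + ‖bc‖ := norm_add_le _ _
        _ < 1 := by linarith
    have hbcball : bc ∈ ball (0:ℂ) 1 := by
      rw [mem_ball_zero_iff]; linarith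
    have hbcmem : bc ∈ closedBall bc er := mem_closedBall_self her
    have hlip : ∀ z₁ ∈ ball (0:ℂ) 1, ∀ z₂ ∈ ball (0:ℂ) 1,
        ‖φ z₁ - φ z₂‖ ≤ 1 / 2 * ‖z₁ - z₂‖ := by
      intro z₁ h₁ z₂ h₂
      have h := happ z₁ h₁ z₂ h₂
      have : φ z₁ - φ z₂ = -(F z₁ - F z₂ - (z₁ - z₂)) := by simp only [hφ]; ring
      rw [this, norm_neg]; exact h
    have hmaps : MapsTo φ (closedBall bc er) (closedBall bc er) := by
      intro z hz
      rw [mem_closedBall, dist_eq_norm]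
      have h1 : ‖φ z - φ bc‖ ≤ 1 / 2 * ‖z - bc‖ := hlip z (hsub hz) bc hbcball
      have h2 : φ bc - bc = y - F bc := by simp only [hφ]; ring
      have h3 : ‖z - bc‖ ≤ er := by rw [mem_closedBall, dist_eq_norm] at hz; exact hz
      calc ‖φ z - bc‖ = ‖(φ z - φ bc) + (φ bc - bc)‖ := by ring_nf
        _ ≤ ‖φ z - φ bc‖ + ‖φ bc - bc‖ := norm_add_le _ _
        _ ≤ 1 / 2 * er + er / 2 := by rw [h2]; exact add_le_add (by linarith) hy
        _ = er := by ring
    have hcomp : IsComplete (closedBall bc er) := isClosed_closedBall.isComplete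
    have hcontr : ContractingWith (1/2 : NNReal) (hmaps.restrict φ _ _) := by
      constructor
      · rw [← NNReal.coe_lt_one]; norm_num
      · apply LipschitzWith.of_dist_le_mul
        rintro ⟨x, hx⟩ ⟨z, hz⟩
        simp only [MapsTo.val_restrict_apply, Subtype.dist_eq, dist_eq_norm]
        have := hlip x (hsub hx) z (hsub hz)
        calc ‖φ x - φ z‖ ≤ 1 / 2 * ‖x - z‖ := this
          _ = ((1/2 : NNReal) : ℝ) * ‖x - z‖ := by norm_num
    obtain ⟨z, hzs, hfix, -, -⟩ :=
      hcontr.exists_fixedPoint' hcomp hmaps hbcmem (edist_ne_top _ _)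
    refine ⟨z, hsub hzs, ?_⟩
    have : φ z = z := hfix
    simp only [hφ] at this
    linear_combination -this
  -- boundedness
  have hbd : ∀ w ∈ Ω, ‖w‖ ≤ 3 / 2 := by
    rintro w ⟨z, hz, rfl⟩
    have h := happ z hz 0 (by simp)
    rw [hF0] at h
    simp only [sub_zero] at h
    have hz1 : ‖z‖ < 1 := mem_ball_zero_iff.1 hz
    calc ‖F z‖ = ‖(F z - z) + z‖ := by ring_nf
      _ ≤ ‖F z - z‖ + ‖z‖ := norm_add_le _ _
      _ ≤ 1 / 2 * ‖z‖ + ‖z‖ := by exact add_le_add h le_rfl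
      _ ≤ 3 / 2 := by linarith
  have h0Ω : (0:ℂ) ∈ Ω := ⟨0, by simp, hF0⟩
  -- star-shapedness
  have hstar : ∀ ρ : ℝ, 0 ≤ ρ → ρ ≤ 1 → ∀ w ∈ Ω, (ρ:ℂ) * w ∈ Ω := by
    rintro ρ h0 h1 w ⟨z, hz, rfl⟩
    have hz1 : ‖z‖ < 1 := mem_ball_zero_iff.1 hz
    apply hsurj ((ρ:ℂ) * z) ((1 - ρ) / 2) (by linarith) ?_ _ ?_
    · have hn : ‖(ρ:ℂ) * z‖ = ρ * ‖z‖ := by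
        rw [norm_mul, Complex.norm_real, Real.norm_of_nonneg h0]
      rw [hn]
      rcases eq_or_lt_of_le h1 with h | h
      · subst h; simpa using hz1
      · nlinarith [norm_nonneg z, mul_le_of_le_one_right h0 (le_of_lt hz1)]
    · have := hrho z hz ρ h0 h1
      calc ‖(ρ:ℂ) * F z - F ((ρ:ℂ) * z)‖ ≤ (1 - ρ) / 4 := this
        _ = (1 - ρ) / 2 / 2 := by ring
  -- radial openness
  have hnext : ∀ w ∈ Ω, ∃ η : ℝ, 0 < η ∧ ∀ y : ℂ, ‖y - w‖ ≤ η → y ∈ Ω := by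
    rintro w ⟨z, hz, rfl⟩
    have hz1 : ‖z‖ < 1 := mem_ball_zero_iff.1 hz
    refine ⟨(1 - ‖z‖) / 4, by linarith, fun y hy => ?_⟩
    exact hsurj z ((1 - ‖z‖) / 2) (by linarith) (by linarith)
      y (by rw [show (1 - ‖z‖) / 2 / 2 = (1 - ‖z‖) / 4 by ring]; exact hy)
  -- neighborhood of zero
  have hzero : ∀ y : ℂ, ‖y‖ ≤ 1 / 4 → y ∈ Ω := by
    intro y hy
    apply hsurj 0 (1/2) (by norm_num) (by norm_num) y
    rw [hF0, sub_zero]; linarith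
  -- the radius function
  set Su : ℂ → Set ℝ := fun u => {r : ℝ | 0 ≤ r ∧ (r:ℂ) * u ∈ Ω} with hSu
  set R : ℂ → ℝ := fun u => sSup (Su u) with hR
  have hne : ∀ u : ℂ, ‖u‖ = 1 → (Su u).Nonempty := by
    intro u hu; exact ⟨0, le_refl 0, by simpa using h0Ω⟩
  have hbdd : ∀ u : ℂ, ‖u‖ = 1 → BddAbove (Su u) := by
    intro u hu
    refine ⟨3/2, fun r hr => ?_⟩
    obtain ⟨hr0, hrΩ⟩ := hr
    have := hbd _ hrΩ
    rwa [norm_mul, Complex.norm_real, hu, mul_one, Real.norm_of_nonneg hr0] at this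
  have hRpos : ∀ u : ℂ, ‖u‖ = 1 → 1/8 ≤ R u := by
    intro u hu
    apply le_csSup (hbdd u hu)
    refine ⟨by norm_num, hzero _ ?_⟩
    rw [norm_mul, Complex.norm_real, hu, mul_one,
      Real.norm_of_nonneg (by norm_num : (0:ℝ) ≤ 1/8)]
    norm_num
  have hmem_iff : ∀ u : ℂ, ‖u‖ = 1 → ∀ r : ℝ, 0 ≤ r → ((r:ℂ) * u ∈ Ω ↔ r < R u) := by
    intro u hu r hr0
    constructor
    · intro hrΩ
      obtain ⟨η, hη, hηΩ⟩ := hnext _ hrΩ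
      have hmem : r + η ∈ Su u := by
        refine ⟨by linarith, hηΩ _ ?_⟩
        have : ((r + η : ℝ):ℂ) * u - (r:ℂ) * u = (η:ℂ) * u := by push_cast; ring
        rw [this, norm_mul, Complex.norm_real, hu, mul_one, Real.norm_of_nonneg (le_of_lt hη)]
      calc r < r + η := by linarith
        _ ≤ R u := le_csSup (hbdd u hu) hmem
    · intro hlt
      obtain ⟨r', ⟨hr'0, hr'Ω⟩, hrr'⟩ := exists_lt_of_lt_csSup (hne u hu) hlt
      have hr'pos : 0 < r' := lt_of_le_of_lt hr0 hrr'
      have hr'C : (r':ℂ) ≠ 0 := by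
        exact_mod_cast ne_of_gt hr'pos
      have key : (r:ℂ) * u = ((r / r' : ℝ):ℂ) * ((r':ℂ) * u) := by
        push_cast
        field_simp
      rw [key]
      exact hstar (r / r') (div_nonneg hr0 (le_of_lt hr'pos))
        (by rw [div_le_one hr'pos]; linarith) _ hr'Ω
  -- build the decomposition
  refine ⟨(fun u : ℂ => (((R u : ℝ):ℂ) * u, u)) '' {u : ℂ | ‖u‖ = 1}, ?_, ?_, ?_⟩
  · rintro p ⟨u, hu, rfl⟩
    simp only [mem_setOf_eq] at hu
    show u ≠ 0
    intro h
    rw [h] at hu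
    simp at hu
  · ext w
    simp only [mem_compl_iff, mem_iUnion, exists_prop]
    constructor
    · intro hw
      have hw0 : w ≠ 0 := fun h => hw (h ▸ h0Ω)
      have hwn : 0 < ‖w‖ := norm_pos_iff.2 hw0
      obtain ⟨u, hu, hwu⟩ : ∃ u : ℂ, ‖u‖ = 1 ∧ w = ((‖w‖ : ℝ):ℂ) * u := by
        refine ⟨((‖w‖⁻¹ : ℝ):ℂ) * w, ?_, ?_⟩
        · rw [norm_mul, Complex.norm_real, Real.norm_of_nonneg (by positivity),
            inv_mul_cancel₀ (ne_of_gt hwn)]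
        · rw [← mul_assoc, ← Complex.ofReal_mul, mul_inv_cancel₀ (ne_of_gt hwn)]
          simp
      have hge : R u ≤ ‖w‖ := by
        by_contra hcon
        push_neg at hcon
        exact hw (by rw [hwu]; exact (hmem_iff u hu ‖w‖ (norm_nonneg w)).2 hcon)
      refine ⟨(((R u : ℝ):ℂ) * u, u), ⟨u, hu, rfl⟩, ⟨‖w‖ - R u, by linarith, ?_⟩⟩
      calc w = ((‖w‖ : ℝ):ℂ) * u := hwu
        _ = ((R u : ℝ):ℂ) * u + ((‖w‖ - R u : ℝ):ℂ) * u := by push_cast; ring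
    · rintro ⟨p, ⟨u, hu, rfl⟩, r, hr, rfl⟩
      simp only [mem_setOf_eq] at hu
      intro hcon
      have : ((R u : ℝ):ℂ) * u + (r:ℂ) * u = (((R u + r : ℝ)):ℂ) * u := by push_cast; ring
      rw [this] at hcon
      have hRu : (0:ℝ) < R u := lt_of_lt_of_le (by norm_num) (hRpos u hu)
      have := (hmem_iff u hu (R u + r) (by linarith)).1 hcon
      linarith
  · rintro p ⟨u, hu, rfl⟩ q ⟨u', hu', rfl⟩ hpq
    simp only [mem_setOf_eq] at hu hu'
    have huu' : u ≠ u' := by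
      intro h; apply hpq; rw [h]
    rw [Set.disjoint_left]
    rintro w ⟨r, hr, rfl⟩ ⟨r', hr', hw'⟩
    have hRu : (0:ℝ) < R u := lt_of_lt_of_le (by norm_num) (hRpos u hu)
    have hRu' : (0:ℝ) < R u' := lt_of_lt_of_le (by norm_num) (hRpos u' hu')
    have e1 : ((R u : ℝ):ℂ) * u + (r:ℂ) * u = (((R u + r : ℝ)):ℂ) * u := by push_cast; ring
    have e2 : ((R u' : ℝ):ℂ) * u' + (r':ℂ) * u' = (((R u' + r' : ℝ)):ℂ) * u' := by push_cast; ring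
    rw [e1, e2] at hw'
    have hn : R u + r = R u' + r' := by
      have h1 := congrArg norm hw'
      rwa [norm_mul, norm_mul, Complex.norm_real, Complex.norm_real, hu, hu', mul_one, mul_one,
        Real.norm_of_nonneg (by linarith : (0:ℝ) ≤ R u + r),
        Real.norm_of_nonneg (by linarith : (0:ℝ) ≤ R u' + r')] at h1
    apply huu'
    have hτ : (((R u + r : ℝ)):ℂ) ≠ 0 := by
      rw [Ne, Complex.ofReal_eq_zero]; intro h; linarith
    rw [hn] at hw'
    exact mul_left_cancel₀ (by rw [← hn]; exact hτ) hw'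

set_option maxHeartbeats 1000000 in
/-- The sufficient coefficient condition implies f is stable harmonic close-to-convex:
every s + ε·conj t with |ε| = 1 is close-to-convex in the unit disk. -/
theorem stmt8 (γ δ lam : ℝ) (hlam : 0 ≤ lam) (hlg : lam < γ) (hgd : γ ≤ δ)
    (s t : ℂ → ℂ) (a b : ℕ → ℂ)
    (ha0 : a 0 = 0) (ha1 : a 1 = 1) (hb0 : b 0 = 0) (hb1 : b 1 = 0)
    (hsrep : ∀ z ∈ ball (0 : ℂ) 1, HasSum (fun m : ℕ => a m * z ^ m) (s z))
    (htrep : ∀ z ∈ ball (0 : ℂ) 1, HasSum (fun m : ℕ => b m * z ^ m) (t z))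
    (hsum : Summable (fun m : ℕ =>
      ((m : ℝ) + 2) ^ 2 * (2 * γ + (δ - γ) * ((m : ℝ) + 1)) * (‖a (m + 2)‖ + ‖b (m + 2)‖)))
    (hle : ∑' m : ℕ,
      ((m : ℝ) + 2) ^ 2 * (2 * γ + (δ - γ) * ((m : ℝ) + 1)) * (‖a (m + 2)‖ + ‖b (m + 2)‖)
        ≤ 2 * (γ - lam)) :
    ∀ ε : ℂ, ‖ε‖ = 1 →
      InjOn (fun z => s z + ε * conj (t z)) (ball (0 : ℂ) 1) ∧
        IsCTCDomain ((fun z => s z + ε * conj (t z)) '' ball (0 : ℂ) 1) := by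
  intro ε hε
  have hγ : 0 < γ := lt_of_le_of_lt hlam hlg
  set A : ℕ → ℝ := fun m => ‖a (m + 2)‖ + ‖b (m + 2)‖ with hA
  have hAnn : ∀ m, 0 ≤ A m := fun m => by positivity
  have hterm : ∀ m : ℕ, ((m:ℝ)+2)^2 * A m ≤
      (1/(2*γ)) * (((m:ℝ)+2)^2 * (2*γ+(δ-γ)*((m:ℝ)+1)) * A m) := by
    intro m
    rw [one_div, inv_mul_eq_div, le_div_iff₀ (by positivity : (0:ℝ) < 2*γ)]
    have h1 : 0 ≤ (δ-γ)*((m:ℝ)+1) := mul_nonneg (by linarith) (by positivity)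
    nlinarith [mul_nonneg (mul_nonneg (sq_nonneg ((m:ℝ)+2)) h1) (hAnn m)]
  have hsum2 : Summable (fun m : ℕ => ((m:ℝ)+2)^2 * A m) :=
    Summable.of_nonneg_of_le (fun m => by positivity) hterm (hsum.mul_left _)
  have hle2 : ∑' m : ℕ, ((m:ℝ)+2)^2 * A m ≤ 1 := by
    have h1 := hsum2.tsum_le_tsum hterm (hsum.mul_left _)
    rw [tsum_mul_left] at h1
    have h2 : (1/(2*γ)) * (∑' m : ℕ,
        ((m:ℝ)+2)^2 * (2*γ+(δ-γ)*((m:ℝ)+1)) * A m) ≤ (1/(2*γ)) * (2*(γ-lam)) :=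
      mul_le_mul_of_nonneg_left hle (by positivity)
    have h3 : (1/(2*γ)) * (2*(γ-lam)) ≤ 1 := by
      rw [show (1/(2*γ)) * (2*(γ-lam)) = (γ-lam)/γ by field_simp, div_le_one hγ]
      linarith
    linarith
  -- norm bounds on the coefficients
  have hna : ∀ m : ℕ, ‖a (m+2)‖ ≤ A m := fun m => le_add_of_nonneg_right (norm_nonneg _)
  have hnb : ∀ m : ℕ, ‖b (m+2)‖ ≤ A m := fun m => le_add_of_nonneg_left (norm_nonneg _)
  have hmn : ∀ m : ℕ, (0:ℝ) ≤ (m:ℝ) := fun m => Nat.cast_nonneg m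
  -- summability with weight (m+2) resp. (m+1)
  have hcomp : ∀ (c : ℕ → ℂ), (∀ m : ℕ, ‖c (m+2)‖ ≤ A m) →
      ∀ (w : ℕ → ℝ), (∀ m, 0 ≤ w m) → (∀ m, w m ≤ ((m:ℝ)+2)^2) →
      (∀ m, w m * ‖c (m+2)‖ ≤ ((m:ℝ)+2)^2 * A m) := by
    intro c hc w hw0 hw2 m
    calc w m * ‖c (m+2)‖ ≤ ((m:ℝ)+2)^2 * ‖c (m+2)‖ :=
          mul_le_mul_of_nonneg_right (hw2 m) (norm_nonneg _)
      _ ≤ ((m:ℝ)+2)^2 * A m := mul_le_mul_of_nonneg_left (hc m) (by positivity)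
  have hw2le : ∀ m : ℕ, ((m:ℝ)+2) ≤ ((m:ℝ)+2)^2 := fun m => by nlinarith [hmn m]
  have hw1le : ∀ m : ℕ, ((m:ℝ)+1) ≤ ((m:ℝ)+2)^2 := fun m => by nlinarith [hmn m]
  have hwa2 : Summable (fun m : ℕ => ((m:ℝ)+2) * ‖a (m+2)‖) :=
    Summable.of_nonneg_of_le (fun m => by positivity)
      (hcomp a hna _ (fun m => by positivity) hw2le) hsum2
  have hwb2 : Summable (fun m : ℕ => ((m:ℝ)+2) * ‖b (m+2)‖) :=
    Summable.of_nonneg_of_le (fun m => by positivity)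
      (hcomp b hnb _ (fun m => by positivity) hw2le) hsum2
  have hwa1 : Summable (fun m : ℕ => ((m:ℝ)+1) * ‖a (m+2)‖) :=
    Summable.of_nonneg_of_le (fun m => by positivity)
      (hcomp a hna _ (fun m => by positivity) hw1le) hsum2
  have hwb1 : Summable (fun m : ℕ => ((m:ℝ)+1) * ‖b (m+2)‖) :=
    Summable.of_nonneg_of_le (fun m => by positivity)
      (hcomp b hnb _ (fun m => by positivity) hw1le) hsum2
  have hsplit2 : (∑' m : ℕ, ((m:ℝ)+2) * ‖a (m+2)‖) + (∑' m : ℕ, ((m:ℝ)+2) * ‖b (m+2)‖)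
      ≤ 1/2 := by
    rw [← Summable.tsum_add hwa2 hwb2]
    have h1 : ∑' m : ℕ, (((m:ℝ)+2) * ‖a (m+2)‖ + ((m:ℝ)+2) * ‖b (m+2)‖)
        ≤ ∑' m : ℕ, (1/2) * (((m:ℝ)+2)^2 * A m) := by
      apply (hwa2.add hwb2).tsum_le_tsum _ (hsum2.mul_left _)
      intro m
      have : ((m:ℝ)+2) * ‖a (m+2)‖ + ((m:ℝ)+2) * ‖b (m+2)‖ = ((m:ℝ)+2) * A m := by
        rw [hA]; ring
      rw [this]
      have h2 : ((m:ℝ)+2) ≤ (1/2) * ((m:ℝ)+2)^2 := by nlinarith [hmn m]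
      nlinarith [hAnn m, mul_le_mul_of_nonneg_right h2 (hAnn m)]
    rw [tsum_mul_left] at h1
    nlinarith [hle2]
  have hsplit1 : (∑' m : ℕ, ((m:ℝ)+1) * ‖a (m+2)‖) + (∑' m : ℕ, ((m:ℝ)+1) * ‖b (m+2)‖)
      ≤ 1/4 := by
    rw [← Summable.tsum_add hwa1 hwb1]
    have h1 : ∑' m : ℕ, (((m:ℝ)+1) * ‖a (m+2)‖ + ((m:ℝ)+1) * ‖b (m+2)‖)
        ≤ ∑' m : ℕ, (1/4) * (((m:ℝ)+2)^2 * A m) := by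
      apply (hwa1.add hwb1).tsum_le_tsum _ (hsum2.mul_left _)
      intro m
      have : ((m:ℝ)+1) * ‖a (m+2)‖ + ((m:ℝ)+1) * ‖b (m+2)‖ = ((m:ℝ)+1) * A m := by
        rw [hA]; ring
      rw [this]
      have h2 : ((m:ℝ)+1) ≤ (1/4) * ((m:ℝ)+2)^2 := by nlinarith [hmn m, sq_nonneg (m:ℝ)]
      nlinarith [hAnn m, mul_le_mul_of_nonneg_right h2 (hAnn m)]
    rw [tsum_mul_left] at h1
    nlinarith [hle2]
  -- series representations
  have hS : ∀ z ∈ ball (0:ℂ) 1, HasSum (fun m => a (m+2) * z^(m+2)) (s z - z) := by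
    intro z hz
    have h := shiftSum (hsrep z hz)
    rwa [ha0, ha1, zero_add, one_mul] at h
  have hT : ∀ z ∈ ball (0:ℂ) 1, HasSum (fun m => b (m+2) * z^(m+2)) (t z) := by
    intro z hz
    have h := shiftSum (htrep z hz)
    rwa [hb0, hb1, zero_add, zero_mul, sub_zero] at h
  have hzero_mem : (0:ℂ) ∈ ball (0:ℂ) 1 := by simp
  have hs0 : s 0 = 0 := by
    have h := hsrep 0 hzero_mem
    have h0 : (fun m : ℕ => a m * (0:ℂ)^m) = fun _ => (0:ℂ) := by
      funext m
      cases m with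
      | zero => simp [ha0]
      | succ n => simp
    rw [h0] at h
    exact h.unique hasSum_zero
  have ht0 : t 0 = 0 := by
    have h := htrep 0 hzero_mem
    have h0 : (fun m : ℕ => b m * (0:ℂ)^m) = fun _ => (0:ℂ) := by
      funext m
      cases m with
      | zero => simp [hb0]
      | succ n => simp
    rw [h0] at h
    exact h.unique hasSum_zero
  set F : ℂ → ℂ := fun z => s z + ε * conj (t z) with hF
  have hF0 : F 0 = 0 := by rw [hF]; simp [hs0, ht0]
  -- the approximation estimate
  have happ : ∀ z₁ ∈ ball (0:ℂ) 1, ∀ z₂ ∈ ball (0:ℂ) 1,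
      ‖F z₁ - F z₂ - (z₁ - z₂)‖ ≤ 1 / 2 * ‖z₁ - z₂‖ := by
    intro z₁ h₁ z₂ h₂
    have hz₁ : ‖z₁‖ ≤ 1 := le_of_lt (mem_ball_zero_iff.1 h₁)
    have hz₂ : ‖z₂‖ ≤ 1 := le_of_lt (mem_ball_zero_iff.1 h₂)
    have hXsum : HasSum (fun m => a (m+2) * z₁^(m+2) - a (m+2) * z₂^(m+2))
        ((s z₁ - z₁) - (s z₂ - z₂)) := (hS z₁ h₁).sub (hS z₂ h₂)
    have hYsum : HasSum (fun m => b (m+2) * z₁^(m+2) - b (m+2) * z₂^(m+2))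
        (t z₁ - t z₂) := (hT z₁ h₁).sub (hT z₂ h₂)
    have hbound : ∀ (c : ℕ → ℂ), ∀ m : ℕ, ‖c (m+2) * z₁^(m+2) - c (m+2) * z₂^(m+2)‖
        ≤ ((m:ℝ)+2) * ‖c (m+2)‖ * ‖z₁ - z₂‖ := by
      intro c m
      rw [← mul_sub, norm_mul]
      have hp := norm_pow_sub_pow_le z₁ z₂ hz₁ hz₂ (m+2)
      calc ‖c (m+2)‖ * ‖z₁^(m+2) - z₂^(m+2)‖
          ≤ ‖c (m+2)‖ * (((m+2 : ℕ):ℝ) * ‖z₁ - z₂‖) :=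
            mul_le_mul_of_nonneg_left hp (norm_nonneg _)
        _ = ((m:ℝ)+2) * ‖c (m+2)‖ * ‖z₁ - z₂‖ := by push_cast; ring
    have hX : ‖(s z₁ - z₁) - (s z₂ - z₂)‖
        ≤ (∑' m : ℕ, ((m:ℝ)+2) * ‖a (m+2)‖) * ‖z₁ - z₂‖ := by
      have h := norm_hasSum_le hXsum (hwa2.mul_right ‖z₁ - z₂‖) (hbound a)
      rwa [tsum_mul_right] at h
    have hY : ‖t z₁ - t z₂‖ ≤ (∑' m : ℕ, ((m:ℝ)+2) * ‖b (m+2)‖) * ‖z₁ - z₂‖ := by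
      have h := norm_hasSum_le hYsum (hwb2.mul_right ‖z₁ - z₂‖) (hbound b)
      rwa [tsum_mul_right] at h
    have key : F z₁ - F z₂ - (z₁ - z₂)
        = ((s z₁ - z₁) - (s z₂ - z₂)) + ε * conj (t z₁ - t z₂) := by
      rw [hF]
      simp only [map_sub]
      ring
    rw [key]
    calc ‖((s z₁ - z₁) - (s z₂ - z₂)) + ε * conj (t z₁ - t z₂)‖
        ≤ ‖(s z₁ - z₁) - (s z₂ - z₂)‖ + ‖ε * conj (t z₁ - t z₂)‖ := norm_add_le _ _
      _ = ‖(s z₁ - z₁) - (s z₂ - z₂)‖ + ‖t z₁ - t z₂‖ := by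
          rw [norm_mul, hε, one_mul, RCLike.norm_conj]
      _ ≤ (∑' m : ℕ, ((m:ℝ)+2) * ‖a (m+2)‖) * ‖z₁ - z₂‖
          + (∑' m : ℕ, ((m:ℝ)+2) * ‖b (m+2)‖) * ‖z₁ - z₂‖ := add_le_add hX hY
      _ ≤ 1 / 2 * ‖z₁ - z₂‖ := by nlinarith [hsplit2, norm_nonneg (z₁ - z₂),
          mul_le_mul_of_nonneg_right hsplit2 (norm_nonneg (z₁ - z₂))]
  -- the radial estimate
  have hrho : ∀ z ∈ ball (0:ℂ) 1, ∀ ρ : ℝ, 0 ≤ ρ → ρ ≤ 1 →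
      ‖(ρ:ℂ) * F z - F ((ρ:ℂ) * z)‖ ≤ (1 - ρ) / 4 := by
    intro z hz ρ h0 h1
    have hz1 : ‖z‖ < 1 := mem_ball_zero_iff.1 hz
    have hρz : (ρ:ℂ) * z ∈ ball (0:ℂ) 1 := by
      rw [mem_ball_zero_iff, norm_mul, Complex.norm_real, Real.norm_of_nonneg h0]
      nlinarith [norm_nonneg z]
    have hXsum : HasSum (fun m => (ρ:ℂ) * (a (m+2) * z^(m+2)) - a (m+2) * ((ρ:ℂ)*z)^(m+2))
        ((ρ:ℂ) * (s z - z) - (s ((ρ:ℂ)*z) - (ρ:ℂ)*z)) :=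
      ((hS z hz).mul_left (ρ:ℂ)).sub (hS ((ρ:ℂ)*z) hρz)
    have hYsum : HasSum (fun m => (ρ:ℂ) * (b (m+2) * z^(m+2)) - b (m+2) * ((ρ:ℂ)*z)^(m+2))
        ((ρ:ℂ) * t z - t ((ρ:ℂ)*z)) :=
      ((hT z hz).mul_left (ρ:ℂ)).sub (hT ((ρ:ℂ)*z) hρz)
    have hρnn : ∀ m : ℕ, 0 ≤ ρ - ρ^(m+2) := by
      intro m
      have h2 := pow_le_pow_of_le_one h0 h1 (show 1 ≤ m+2 by omega)
      rw [pow_one] at h2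
      linarith
    have hbound : ∀ (c : ℕ → ℂ), ∀ m : ℕ,
        ‖(ρ:ℂ) * (c (m+2) * z^(m+2)) - c (m+2) * ((ρ:ℂ)*z)^(m+2)‖
        ≤ ((m:ℝ)+1) * ‖c (m+2)‖ * (1 - ρ) := by
      intro c m
      have e : (ρ:ℂ) * (c (m+2) * z^(m+2)) - c (m+2) * ((ρ:ℂ)*z)^(m+2)
          = c (m+2) * z^(m+2) * ((ρ:ℂ) - (ρ:ℂ)^(m+2)) := by ring
      rw [e, norm_mul, norm_mul, norm_pow]
      have hρc : ‖(ρ:ℂ) - (ρ:ℂ)^(m+2)‖ = ρ - ρ^(m+2) := by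
        rw [show (ρ:ℂ) - (ρ:ℂ)^(m+2) = ((ρ - ρ^(m+2) : ℝ):ℂ) by push_cast; ring,
          Complex.norm_real, Real.norm_of_nonneg (hρnn m)]
      rw [hρc]
      have hpow2 : ρ - ρ^(m+2) ≤ ((m:ℝ)+1) * (1 - ρ) := by
        have h2 := one_sub_pow_le' ρ h0 h1 (m+1)
        have h3 : 0 ≤ 1 - ρ^(m+1) := by
          have := pow_le_one₀ h0 h1 (n := m+1); linarith
        have h4 : ρ * (1 - ρ^(m+1)) ≤ 1 * (1 - ρ^(m+1)) :=
          mul_le_mul_of_nonneg_right h1 h3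
        push_cast at h2
        have h5 : ρ - ρ^(m+2) = ρ * (1 - ρ^(m+1)) := by ring
        linarith
      have hzn : ‖z‖^(m+2) ≤ 1 := pow_le_one₀ (norm_nonneg z) (le_of_lt hz1)
      calc ‖c (m+2)‖ * ‖z‖^(m+2) * (ρ - ρ^(m+2))
          ≤ ‖c (m+2)‖ * 1 * (((m:ℝ)+1) * (1 - ρ)) := by
            apply mul_le_mul
            · exact mul_le_mul_of_nonneg_left hzn (norm_nonneg _)
            · exact hpow2
            · exact hρnn m
            · positivity
        _ = ((m:ℝ)+1) * ‖c (m+2)‖ * (1 - ρ) := by ring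
    have hX : ‖(ρ:ℂ) * (s z - z) - (s ((ρ:ℂ)*z) - (ρ:ℂ)*z)‖
        ≤ (∑' m : ℕ, ((m:ℝ)+1) * ‖a (m+2)‖) * (1 - ρ) := by
      have h := norm_hasSum_le hXsum (hwa1.mul_right (1 - ρ)) (hbound a)
      rwa [tsum_mul_right] at h
    have hY : ‖(ρ:ℂ) * t z - t ((ρ:ℂ)*z)‖
        ≤ (∑' m : ℕ, ((m:ℝ)+1) * ‖b (m+2)‖) * (1 - ρ) := by
      have h := norm_hasSum_le hYsum (hwb1.mul_right (1 - ρ)) (hbound b)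
      rwa [tsum_mul_right] at h
    have hc : (ρ:ℂ) * conj (t z) = conj ((ρ:ℂ) * t z) := by
      rw [map_mul, Complex.conj_ofReal]
    have key : (ρ:ℂ) * F z - F ((ρ:ℂ) * z)
        = ((ρ:ℂ) * (s z - z) - (s ((ρ:ℂ)*z) - (ρ:ℂ)*z))
          + ε * conj ((ρ:ℂ) * t z - t ((ρ:ℂ)*z)) := by
      rw [hF]
      simp only [map_sub, ← hc]
      ring
    rw [key]
    calc ‖((ρ:ℂ) * (s z - z) - (s ((ρ:ℂ)*z) - (ρ:ℂ)*z))
          + ε * conj ((ρ:ℂ) * t z - t ((ρ:ℂ)*z))‖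
        ≤ ‖(ρ:ℂ) * (s z - z) - (s ((ρ:ℂ)*z) - (ρ:ℂ)*z)‖
          + ‖ε * conj ((ρ:ℂ) * t z - t ((ρ:ℂ)*z))‖ := norm_add_le _ _
      _ = ‖(ρ:ℂ) * (s z - z) - (s ((ρ:ℂ)*z) - (ρ:ℂ)*z)‖
          + ‖(ρ:ℂ) * t z - t ((ρ:ℂ)*z)‖ := by rw [norm_mul, hε, one_mul, RCLike.norm_conj]
      _ ≤ (∑' m : ℕ, ((m:ℝ)+1) * ‖a (m+2)‖) * (1 - ρ)
          + (∑' m : ℕ, ((m:ℝ)+1) * ‖b (m+2)‖) * (1 - ρ) := add_le_add hX hY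
      _ ≤ (1 - ρ) / 4 := by nlinarith [hsplit1,
          mul_le_mul_of_nonneg_right hsplit1 (by linarith : (0:ℝ) ≤ 1 - ρ)]
  exact geomMain F hF0 happ hrho
end

section
/- Let 0 ≤ λ < γ ≤ δ be real numbers. The class R_H⁰(γ,δ,λ) is closed under convex combinations: if f_1, ..., f_n belong to R_H⁰(γ,δ,λ) and ϱ_1, ..., ϱ_n are nonnegative real numbers with ϱ_1 + ... + ϱ_n = 1, then Σ_{i=1}^n ϱ_i f_i belongs to R_H⁰(γ,δ,λ). -/
open Complex Metric Set ComplexConjugate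

private lemma sumIterDeriv {n : ℕ} (g : Fin n → ℂ → ℂ) (c : Fin n → ℂ)
    (hg : ∀ i, AnalyticOnNhd ℂ (g i) (ball 0 1)) (k : ℕ) :
    ∀ z ∈ ball (0:ℂ) 1, iteratedDeriv k (fun w => ∑ i, c i * g i w) z
      = ∑ i, c i * iteratedDeriv k (g i) z := by
  induction k with
  | zero => simp
  | succ k ih =>
    intro z hz
    rw [iteratedDeriv_succ]
    have hev : iteratedDeriv k (fun w => ∑ i, c i * g i w) =ᶠ[nhds z]
        fun w => ∑ i, c i * iteratedDeriv k (g i) w :=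
      Filter.eventuallyEq_of_mem (isOpen_ball.mem_nhds hz) (fun w hw => ih w hw)
    have hdiff : ∀ i : Fin n, DifferentiableAt ℂ (iteratedDeriv k (g i)) z := by
      intro i
      have := ((hg i).iterated_deriv k) z hz
      rw [iteratedDeriv_eq_iterate]
      exact this.differentiableAt
    rw [hev.deriv_eq]
    rw [deriv_fun_sum (fun i _ => (hdiff i).const_mul (c i))]
    congr 1; ext i
    rw [deriv_const_mul _ (hdiff i), ← iteratedDeriv_succ]

private lemma dopSum {n : ℕ} (γ δ : ℝ) (g : Fin n → ℂ → ℂ) (c : Fin n → ℂ)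
    (hg : ∀ i, AnalyticOnNhd ℂ (g i) (ball 0 1)) :
    ∀ z ∈ ball (0:ℂ) 1, dop γ δ (fun w => ∑ i, c i * g i w) z
      = ∑ i, c i * dop γ δ (g i) z := by
  intro z hz
  have h1 := sumIterDeriv g c hg 1 z hz
  rw [iteratedDeriv_one] at h1
  have h2 := sumIterDeriv g c hg 2 z hz
  have h3 := sumIterDeriv g c hg 3 z hz
  simp only [dop, h1, h2, h3, Finset.mul_sum, ← Finset.sum_add_distrib]
  congr 1; ext i
  simp only [iteratedDeriv_one]
  ring

/-- The class R_H⁰(γ,δ,λ) is closed under convex combinations. -/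
theorem stmt11 (γ δ lam : ℝ) (hlam : 0 ≤ lam) (hlg : lam < γ) (hgd : γ ≤ δ)
    (n : ℕ) (s t : Fin n → ℂ → ℂ) (ϱ : Fin n → ℝ)
    (hϱ : ∀ i, 0 ≤ ϱ i) (hϱsum : ∑ i, ϱ i = 1)
    (hf : ∀ i, MemRH0 γ δ lam (s i) (t i)) :
    MemRH0 γ δ lam (fun z => ∑ i, (ϱ i : ℂ) * s i z)
      (fun z => ∑ i, (ϱ i : ℂ) * t i z) := by
  have hsA : ∀ i, AnalyticOnNhd ℂ (s i) (ball 0 1) := fun i => (hf i).1.1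
  have htA : ∀ i, AnalyticOnNhd ℂ (t i) (ball 0 1) := fun i => (hf i).1.2.1
  have h0 : (0:ℂ) ∈ ball (0:ℂ) 1 := mem_ball_self one_pos
  have hcsum : ∑ i, ((ϱ i : ℂ)) = 1 := by
    rw [← Complex.ofReal_sum, hϱsum, Complex.ofReal_one]
  constructor
  · refine ⟨?_, ?_, ?_, ?_, ?_, ?_⟩
    · intro z hz
      exact Finset.analyticAt_fun_sum _ (fun i _ => analyticAt_const.mul (hsA i z hz))
    · intro z hz
      exact Finset.analyticAt_fun_sum _ (fun i _ => analyticAt_const.mul (htA i z hz))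
    · simp [(fun i => (hf i).1.2.2.1)]
    · have := sumIterDeriv s (fun i => (ϱ i : ℂ)) hsA 1 0 h0
      rw [iteratedDeriv_one] at this
      simp only [iteratedDeriv_one] at this
      rw [this]
      simp [(fun i => (hf i).1.2.2.2.1), hcsum]
    · simp [(fun i => (hf i).1.2.2.2.2.1)]
    · have := sumIterDeriv t (fun i => (ϱ i : ℂ)) htA 1 0 h0
      rw [iteratedDeriv_one] at this
      simp only [iteratedDeriv_one] at this
      rw [this]
      simp [(fun i => (hf i).1.2.2.2.2.2)]
  · intro z hz
    rw [dopSum γ δ t _ htA z hz, dopSum γ δ s _ hsA z hz]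
    have hkey : ∑ i, ϱ i * ‖dop γ δ (t i) z‖ < ∑ i, ϱ i * (dop γ δ (s i) z - (lam:ℂ)).re := by
      obtain ⟨i0, -, hi0⟩ : ∃ i ∈ Finset.univ, (0:ℝ) < ϱ i := by
        apply Finset.exists_lt_of_sum_lt
        rw [hϱsum, Finset.sum_const_zero]; exact one_pos
      refine Finset.sum_lt_sum (fun i _ => ?_) ⟨i0, Finset.mem_univ i0, ?_⟩
      · exact mul_le_mul_of_nonneg_left (le_of_lt ((hf i).2 z hz)) (hϱ i)
      · exact mul_lt_mul_of_pos_left ((hf i0).2 z hz) hi0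
    calc ‖∑ i, (ϱ i : ℂ) * dop γ δ (t i) z‖
        ≤ ∑ i, ϱ i * ‖dop γ δ (t i) z‖ := by
          refine (norm_sum_le _ _).trans_eq ?_
          congr 1; ext i
          rw [norm_mul, Complex.norm_real, Real.norm_eq_abs, _root_.abs_of_nonneg (hϱ i)]
      _ < ∑ i, ϱ i * (dop γ δ (s i) z - (lam:ℂ)).re := hkey
      _ = (∑ i, (ϱ i : ℂ) * dop γ δ (s i) z - (lam:ℂ)).re := by
          simp only [Complex.sub_re, Complex.ofReal_re, mul_sub]
          rw [Finset.sum_sub_distrib, ← Finset.sum_mul, hϱsum, one_mul, Complex.re_sum]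
          congr 1
          refine Finset.sum_congr rfl fun i _ => ?_
          simp [Complex.mul_re]
end

section
/- Let 0 ≤ λ < γ ≤ δ be real numbers. If F belongs to the class R(γ,δ,λ), then Re{F(z)/z} > 1/2 for all nonzero z in the open unit disk U. -/
open Complex Metric Set ComplexConjugate

private lemma key_alg (g ce vv W Wp a b : ℂ) (hW : W ≠ 0) (hg : g ≠ 0) (hv : vv ≠ 0)
    (hWp : Wp = ce * W / vv) :
    1 * (a * W⁻¹) + vv * (Wp * b * W⁻¹ + a * (Wp * -((W^2)⁻¹)))
      = g⁻¹ * (W⁻¹ * ((ce * g) * W * b + (g - ce * g) * a)) := by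
  subst hWp
  simp only [mul_neg, neg_mul, one_mul, mul_inv, div_eq_mul_inv]
  ring_nf
  field_simp

set_option maxHeartbeats 1000000 in
/-- If F ∈ R(γ,δ,λ) then Re (F(z)/z) > 1/2 for all nonzero z in the unit disk. -/
theorem stmt12 (γ δ lam : ℝ) (hlam : 0 ≤ lam) (hlg : lam < γ) (hgd : γ ≤ δ)
    (F : ℂ → ℂ) (hF : MemR γ δ lam F) :
    ∀ z ∈ ball (0 : ℂ) 1, z ≠ 0 → 1 / 2 < (F z / z).re := by
  obtain ⟨hFa, hF0, hF1, hRe⟩ := hF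
  have hγ : (0:ℝ) < γ := lt_of_le_of_lt hlam hlg
  have hgl : (0:ℝ) < γ - lam := by linarith
  set α : ℝ := (δ - γ)/2 with hα
  set β : ℝ := (3*γ - δ)/2 with hβ
  have hα0 : 0 ≤ α := by simp only [hα]; linarith
  set c : ℝ := α / γ with hc
  have hc0 : 0 ≤ c := div_nonneg hα0 hγ.le
  -- derivative functions
  set D1 : ℂ → ℂ := deriv F with hD1
  set D2 : ℂ → ℂ := deriv D1 with hD2
  set D3 : ℂ → ℂ := deriv D2 with hD3
  have hA1 : AnalyticOnNhd ℂ D1 (ball 0 1) := hFa.deriv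
  have hA2 : AnalyticOnNhd ℂ D2 (ball 0 1) := hA1.deriv
  have hA3 : AnalyticOnNhd ℂ D3 (ball 0 1) := hA2.deriv
  set G : ℂ → ℂ := fun w => (γ:ℂ) * D1 w + (δ:ℂ) * w * D2 w + (α:ℂ) * w^2 * D3 w with hG
  have hdop : ∀ w, dop γ δ F w = G w := by
    intro w
    have h2 : iteratedDeriv 2 F = D2 := by
      rw [iteratedDeriv_succ, iteratedDeriv_one]
    have h3 : iteratedDeriv 3 F = D3 := by
      rw [iteratedDeriv_succ, h2]
    simp only [dop, h2, h3, hG]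
    push_cast [hα]
    ring
  have hGRe : ∀ w ∈ ball (0:ℂ) 1, lam < (G w).re := by
    intro w hw; rw [← hdop]; exact hRe w hw
  have hGA : AnalyticOnNhd ℂ G (ball 0 1) := by
    apply ((analyticOnNhd_const.mul hA1).add
      ((analyticOnNhd_const.mul (analyticOnNhd_id)).mul hA2)).add
      ((analyticOnNhd_const.mul (analyticOnNhd_id.pow 2)).mul hA3)
  have hG0 : G 0 = (γ:ℂ) := by
    simp [hG, ← hD1, hF1]
  -- pointwise derivatives
  have hD1d : ∀ w ∈ ball (0:ℂ) 1, HasDerivAt F (D1 w) w :=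
    fun w hw => (hFa w hw).differentiableAt.hasDerivAt
  have hD2d : ∀ w ∈ ball (0:ℂ) 1, HasDerivAt D1 (D2 w) w :=
    fun w hw => (hA1 w hw).differentiableAt.hasDerivAt
  have hD3d : ∀ w ∈ ball (0:ℂ) 1, HasDerivAt D2 (D3 w) w :=
    fun w hw => (hA2 w hw).differentiableAt.hasDerivAt
  set E1 : ℂ → ℂ := fun w => (γ:ℂ) * D1 w + (α:ℂ) * w * D2 w with hE1
  set E2 : ℂ → ℂ := fun w => (α:ℂ) * w * D1 w + (β:ℂ) * F w with hE2
  have hba : (β:ℂ) = (γ:ℂ) - (α:ℂ) := by push_cast [hβ, hα]; ring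
  have hdel : (δ:ℂ) = (γ:ℂ) + 2*(α:ℂ) := by push_cast [hα]; ring
  have hE2d : ∀ w ∈ ball (0:ℂ) 1, HasDerivAt E2 (E1 w) w := by
    intro w hw
    have h1 : HasDerivAt (fun w : ℂ => (α:ℂ) * w * D1 w)
        ((α:ℂ) * D1 w + (α:ℂ) * w * D2 w) w := by
      have := (((hasDerivAt_id w).const_mul (α:ℂ)).mul (hD2d w hw))
      convert this using 1
      · rfl
      · rfl
      · rfl
      simp only [id_eq]; ring
    have h2 := (hD1d w hw).const_mul (β:ℂ)
    have := h1.add h2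
    convert this using 1
    · rfl
    · rfl
    · rfl
    simp only [hE1, hba]; ring
  have hE1d : ∀ w ∈ ball (0:ℂ) 1, HasDerivAt E1
      ((γ:ℂ) * D2 w + (α:ℂ) * D2 w + (α:ℂ) * w * D3 w) w := by
    intro w hw
    have h1 := (hD2d w hw).const_mul (γ:ℂ)
    have h2 : HasDerivAt (fun w : ℂ => (α:ℂ) * w * D2 w)
        ((α:ℂ) * D2 w + (α:ℂ) * w * D3 w) w := by
      have := (((hasDerivAt_id w).const_mul (α:ℂ)).mul (hD3d w hw))
      convert this using 1
      · rfl
      · rfl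
      · rfl
      simp only [id_eq]; ring
    have := h1.add h2
    convert this using 1; rfl; rfl; rfl; ring
  have hh1d : ∀ w ∈ ball (0:ℂ) 1, HasDerivAt (fun w => w * E1 w) (G w) w := by
    intro w hw
    have := (hasDerivAt_id w).mul (hE1d w hw)
    convert this using 1
    · rfl
    · rfl
    · rfl
    simp only [hG, hE1, hdel, id_eq]; ring
  -- continuity facts
  have hE1cont : ContinuousOn E1 (ball (0:ℂ) 1) := by
    exact (continuousOn_const.mul hA1.continuousOn).add
      ((continuousOn_const.mul continuousOn_id).mul hA2.continuousOn)
  have hGcont : ContinuousOn G (ball (0:ℂ) 1) := hGA.continuousOn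
  -- mapsto for segments
  have hseg : ∀ w ∈ ball (0:ℂ) 1, ∀ t ∈ Icc (0:ℝ) 1, ((t:ℂ) * w) ∈ ball (0:ℂ) 1 := by
    intro w hw t ht
    rw [mem_ball_zero_iff] at hw ⊢
    rw [norm_mul, Complex.norm_real, Real.norm_eq_abs, _root_.abs_of_nonneg ht.1]
    calc t * ‖w‖ ≤ 1 * ‖w‖ := by
          apply mul_le_mul_of_nonneg_right ht.2 (norm_nonneg _)
      _ < 1 := by simpa using hw
  ---- Step 0 : Harnack-type bound for G
  have hHar : ∀ w ∈ ball (0:ℂ) 1, γ - 2*(γ - lam)*‖w‖ ≤ (G w).re := by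
    intro w hw
    set P : ℂ → ℂ := fun u => (G u - (lam:ℂ)) / (((γ - lam : ℝ)) : ℂ) with hP
    have hglC : (((γ:ℝ) - lam : ℝ) : ℂ) ≠ 0 := by
      simp only [ne_eq, Complex.ofReal_eq_zero]; exact hgl.ne'
    have hPre : ∀ u ∈ ball (0:ℂ) 1, 0 < (P u).re := by
      intro u hu
      have := hGRe u hu
      simp only [hP, Complex.div_ofReal_re, Complex.sub_re, Complex.ofReal_re]
      exact div_pos (by linarith) hgl
    have hsub1 : ∀ q : ℂ, ‖q - 1‖^2 = (q.re - 1)^2 + q.im^2 := by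
      intro q
      rw [Complex.sq_norm]
      simp only [Complex.normSq_apply, Complex.sub_re, Complex.sub_im, Complex.one_re,
        Complex.one_im]
      ring
    have hadd1 : ∀ q : ℂ, ‖q + 1‖^2 = (q.re + 1)^2 + q.im^2 := by
      intro q
      rw [Complex.sq_norm]
      simp only [Complex.normSq_apply, Complex.add_re, Complex.add_im, Complex.one_re,
        Complex.one_im]
      ring
    have hPd : DifferentiableOn ℂ P (ball 0 1) := by
      exact ((hGA.differentiableOn.sub_const _).div_const _)
    have hden : ∀ u ∈ ball (0:ℂ) 1, P u + 1 ≠ 0 := by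
      intro u hu h
      have h1 := hPre u hu
      have h2 : (P u + 1).re = (P u).re + 1 := by simp
      rw [h] at h2; simp at h2; linarith
    set ω : ℂ → ℂ := fun u => (P u - 1) / (P u + 1) with hω
    have hωd : DifferentiableOn ℂ ω (ball 0 1) :=
      (hPd.sub_const 1).div (hPd.add_const 1) hden
    have hmaps : MapsTo ω (ball (0:ℂ) 1) (ball (0:ℂ) 1) := by
      intro u hu
      rw [mem_ball_zero_iff]
      simp only [hω, norm_div]
      rw [div_lt_one (by simpa using norm_pos_iff.2 (hden u hu))]
      have : ‖P u - 1‖^2 < ‖P u + 1‖^2 := by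
        rw [hsub1, hadd1]
        have := hPre u hu
        nlinarith
      nlinarith [norm_nonneg (P u - 1), norm_nonneg (P u + 1)]
    have hω0 : ω 0 = 0 := by
      have hP0 : P 0 = 1 := by
        simp only [hP, hG0]
        rw [div_eq_one_iff_eq hglC]
        push_cast; ring
      simp [hω, hP0]
    have hSch : ‖ω w‖ ≤ ‖w‖ := by
      apply Complex.norm_le_norm_of_mapsTo_ball hωd (hmaps.mono_right ball_subset_closedBall) hω0
      simpa [mem_ball_zero_iff] using hw
    -- unpack
    have hkey : P w - 1 = ω w * (P w + 1) := by
      simp only [hω]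
      rw [div_mul_cancel₀ _ (hden w hw)]
    have hnorm : ‖P w - 1‖ ≤ ‖w‖ * ‖P w + 1‖ := by
      rw [hkey, norm_mul]
      apply mul_le_mul_of_nonneg_right _ (norm_nonneg _)
      simpa using hSch
    have hr0 : (0:ℝ) ≤ ‖w‖ := norm_nonneg _
    have hr1 : ‖w‖ < 1 := mem_ball_zero_iff.1 hw
    have hu0 : 0 < (P w).re := hPre w hw
    have h1 : ‖P w - 1‖^2 ≤ (‖w‖ * ‖P w + 1‖)^2 := by
      apply sq_le_sq' _ hnorm
      nlinarith [norm_nonneg (P w - 1), mul_nonneg (norm_nonneg w) (norm_nonneg (P w + 1))]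
    rw [hsub1, mul_pow, hadd1] at h1
    have hB : (0:ℝ) ≤ (1 - ‖w‖^2) * (P w).im^2 := by
      apply mul_nonneg _ (sq_nonneg _)
      nlinarith
    have h1' : ((P w).re - 1)^2 ≤ ‖w‖^2 * ((P w).re + 1)^2 := by nlinarith [h1, hB]
    have habs : |(P w).re - 1| ≤ ‖w‖ * ((P w).re + 1) := by
      have h2 := Real.sqrt_le_sqrt h1'
      rw [Real.sqrt_sq_eq_abs] at h2
      have h3 : Real.sqrt (‖w‖^2 * ((P w).re + 1)^2) = ‖w‖ * ((P w).re + 1) := by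
        rw [show ‖w‖^2 * ((P w).re + 1)^2 = (‖w‖ * ((P w).re + 1))^2 by ring,
          Real.sqrt_sq (by positivity)]
      rw [h3] at h2
      exact h2
    have hlin : 1 - ‖w‖ ≤ (P w).re * (1 + ‖w‖) := by
      have := neg_abs_le ((P w).re - 1)
      have h4 : -(‖w‖ * ((P w).re + 1)) ≤ (P w).re - 1 := by linarith [habs]
      nlinarith
    have hub : 1 - 2*‖w‖ ≤ (P w).re := by nlinarith [hlin, sq_nonneg ‖w‖]
    have hGre : (G w).re = lam + (γ - lam) * (P w).re := by
      have h : (P w).re = ((G w).re - lam) / (γ - lam) := by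
        rw [hP]
        simp only [Complex.div_ofReal_re, Complex.sub_re, Complex.ofReal_re]
      rw [h]; field_simp; ring
    rw [hGre]
    nlinarith [mul_le_mul_of_nonneg_left hub hgl.le]
  ---- Step 1 : bound for E1
  have hB1 : ∀ w ∈ ball (0:ℂ) 1, γ - (γ - lam)*‖w‖ ≤ (E1 w).re := by
    intro w hw
    rcases eq_or_ne w 0 with rfl | hw0
    · simp [hE1, ← hD1, hF1]
    · -- FTC for h₁(tw)
      have hderiv : ∀ t ∈ uIcc (0:ℝ) 1,
          HasDerivAt (fun t : ℝ => ((t:ℂ) * w) * E1 ((t:ℂ)*w)) (w * G ((t:ℂ)*w)) t := by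
        intro t ht
        rw [uIcc_of_le zero_le_one] at ht
        have hmem := hseg w hw t ht
        have hline : HasDerivAt (fun t : ℝ => (t:ℂ) * w) w t := by
          simpa using (Complex.ofRealCLM.hasDerivAt.mul_const w)
        have hcomp := HasDerivAt.scomp (x := t)
          (h := fun t : ℝ => (t:ℂ) * w) (hg := hh1d _ hmem) (hh := hline)
        exact hcomp
      have hGint : IntervalIntegrable (fun t : ℝ => G ((t:ℂ)*w)) MeasureTheory.volume 0 1 := by
        apply ContinuousOn.intervalIntegrable
        rw [uIcc_of_le zero_le_one]
        apply hGcont.comp ((Complex.continuous_ofReal.mul continuous_const).continuousOn)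
        intro t ht; exact hseg w hw t ht
      have hint : IntervalIntegrable (fun t : ℝ => w * G ((t:ℂ)*w)) MeasureTheory.volume 0 1 :=
        hGint.const_mul w
      have hFTC := intervalIntegral.integral_eq_sub_of_hasDerivAt hderiv hint
      simp only [Complex.ofReal_one, Complex.ofReal_zero, one_mul, zero_mul, sub_zero] at hFTC
      rw [intervalIntegral.integral_const_mul] at hFTC
      have hE1eq : E1 w = ∫ t in (0:ℝ)..1, G ((t:ℂ)*w) :=
        (mul_left_cancel₀ hw0 hFTC).symm
      -- take real parts
      have hre : (E1 w).re = ∫ t in (0:ℝ)..1, (G ((t:ℂ)*w)).re := by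
        rw [hE1eq]
        exact (Complex.reCLM.intervalIntegral_comp_comm hGint).symm
      rw [hre]
      have hlow : ∀ t ∈ Icc (0:ℝ) 1,
          γ - (2*(γ - lam)*‖w‖) * t ≤ (G ((t:ℂ)*w)).re := by
        intro t ht
        have := hHar _ (hseg w hw t ht)
        have hn : ‖(t:ℂ)*w‖ = t * ‖w‖ := by
          rw [norm_mul, Complex.norm_real, Real.norm_eq_abs, _root_.abs_of_nonneg ht.1]
        rw [hn] at this
        calc γ - (2*(γ - lam)*‖w‖) * t = γ - 2*(γ-lam)*(t*‖w‖) := by ring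
          _ ≤ _ := this
      have hmono := intervalIntegral.integral_mono_on (μ := MeasureTheory.volume) zero_le_one
        (by apply ContinuousOn.intervalIntegrable; fun_prop) 
        (by
          apply ContinuousOn.intervalIntegrable
          rw [uIcc_of_le zero_le_one]
          apply Complex.continuous_re.comp_continuousOn
          apply hGcont.comp ((Complex.continuous_ofReal.mul continuous_const).continuousOn)
          intro t ht; exact hseg w hw t ht) hlow
      calc γ - (γ - lam)*‖w‖ = ∫ t in (0:ℝ)..1, (γ - (2*(γ - lam)*‖w‖) * t) := by
            rw [intervalIntegral.integral_sub intervalIntegrable_const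
              (Continuous.intervalIntegrable (by fun_prop) 0 1)]
            rw [intervalIntegral.integral_const_mul, integral_id,
              intervalIntegral.integral_const]
            simp
            ring
        _ ≤ _ := hmono
  ---- Step 2 : bound for dslope E2 0
  have hE20 : E2 0 = 0 := by simp [hE2, hF0]
  have hB2 : ∀ w ∈ ball (0:ℂ) 1, γ - (γ - lam)/2*‖w‖ ≤ (dslope E2 0 w).re := by
    intro w hw
    rcases eq_or_ne w 0 with rfl | hw0
    · rw [dslope_same]
      have : deriv E2 0 = E1 0 := (hE2d 0 (by simp)).deriv
      rw [this]
      simp [hE1, ← hD1, hF1]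
    · have hderiv : ∀ t ∈ uIcc (0:ℝ) 1,
          HasDerivAt (fun t : ℝ => E2 ((t:ℂ)*w)) (w * E1 ((t:ℂ)*w)) t := by
        intro t ht
        rw [uIcc_of_le zero_le_one] at ht
        have hmem := hseg w hw t ht
        have hline : HasDerivAt (fun t : ℝ => (t:ℂ) * w) w t := by
          simpa using (Complex.ofRealCLM.hasDerivAt.mul_const w)
        have hcomp := HasDerivAt.scomp (x := t)
          (h := fun t : ℝ => (t:ℂ) * w) (hg := hE2d _ hmem) (hh := hline)
        exact hcomp
      have hE1int : IntervalIntegrable (fun t : ℝ => E1 ((t:ℂ)*w)) MeasureTheory.volume 0 1 := by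
        apply ContinuousOn.intervalIntegrable
        rw [uIcc_of_le zero_le_one]
        apply hE1cont.comp ((Complex.continuous_ofReal.mul continuous_const).continuousOn)
        intro t ht; exact hseg w hw t ht
      have hint : IntervalIntegrable (fun t : ℝ => w * E1 ((t:ℂ)*w)) MeasureTheory.volume 0 1 :=
        hE1int.const_mul w
      have hFTC := intervalIntegral.integral_eq_sub_of_hasDerivAt hderiv hint
      simp only [Complex.ofReal_one, Complex.ofReal_zero, one_mul, zero_mul, hE20, sub_zero] at hFTC
      rw [intervalIntegral.integral_const_mul] at hFTC
      have hds : dslope E2 0 w = ∫ t in (0:ℝ)..1, E1 ((t:ℂ)*w) := by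
        rw [dslope_of_ne _ hw0, slope_def_field, hE20, sub_zero, sub_zero]
        rw [← hFTC, mul_comm, mul_div_assoc, div_self hw0, mul_one]
      rw [hds]
      have hre : (∫ t in (0:ℝ)..1, E1 ((t:ℂ)*w)).re
          = ∫ t in (0:ℝ)..1, (E1 ((t:ℂ)*w)).re :=
        (Complex.reCLM.intervalIntegral_comp_comm hE1int).symm
      rw [hre]
      have hlow : ∀ t ∈ Icc (0:ℝ) 1,
          γ - ((γ - lam)*‖w‖) * t ≤ (E1 ((t:ℂ)*w)).re := by
        intro t ht
        have := hB1 _ (hseg w hw t ht)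
        have hn : ‖(t:ℂ)*w‖ = t * ‖w‖ := by
          rw [norm_mul, Complex.norm_real, Real.norm_eq_abs, _root_.abs_of_nonneg ht.1]
        rw [hn] at this
        calc γ - ((γ - lam)*‖w‖) * t = γ - (γ-lam)*(t*‖w‖) := by ring
          _ ≤ _ := this
      have hmono := intervalIntegral.integral_mono_on (μ := MeasureTheory.volume) zero_le_one
        (by apply ContinuousOn.intervalIntegrable; fun_prop)
        (by
          apply ContinuousOn.intervalIntegrable
          rw [uIcc_of_le zero_le_one]
          apply Complex.continuous_re.comp_continuousOn
          apply hE1cont.comp ((Complex.continuous_ofReal.mul continuous_const).continuousOn)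
          intro t ht; exact hseg w hw t ht) hlow
      calc γ - (γ - lam)/2*‖w‖ = ∫ t in (0:ℝ)..1, (γ - ((γ - lam)*‖w‖) * t) := by
            rw [intervalIntegral.integral_sub intervalIntegrable_const
              (Continuous.intervalIntegrable (by fun_prop) 0 1)]
            rw [intervalIntegral.integral_const_mul, integral_id,
              intervalIntegral.integral_const]
            simp
            ring
        _ ≤ _ := hmono
  ---- Step 3 : the final FTC with the rpow weight
  intro z hz hz0
  have hzn : ‖z‖ < 1 := mem_ball_zero_iff.1 hz
  set w : ℝ → ℂ := fun v => ((v ^ c : ℝ) : ℂ) * z with hwdef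
  have hwmem : ∀ v ∈ Icc (0:ℝ) 1, w v ∈ ball (0:ℂ) 1 := by
    intro v hv
    rw [mem_ball_zero_iff, hwdef]
    simp only [norm_mul, Complex.norm_real, Real.norm_eq_abs,
      _root_.abs_of_nonneg (Real.rpow_nonneg hv.1 c)]
    calc v ^ c * ‖z‖ ≤ 1 * ‖z‖ := by
          apply mul_le_mul_of_nonneg_right (Real.rpow_le_one hv.1 hv.2 hc0) (norm_nonneg _)
      _ < 1 := by simpa using hzn
  have hwne : ∀ v : ℝ, 0 < v → w v ≠ 0 := by
    intro v hv
    simp only [hwdef, ne_eq, mul_eq_zero, Complex.ofReal_eq_zero, not_or]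
    exact ⟨(Real.rpow_pos_of_pos hv c).ne', hz0⟩
  have hwc : Continuous (fun v : ℝ => w v) := by
    apply Continuous.mul _ continuous_const
    apply Complex.continuous_ofReal.comp
    rcases eq_or_lt_of_le hc0 with hc' | hc'
    · simp only [← hc', Real.rpow_zero]; exact continuous_const
    · exact continuous_id.rpow_const (fun x => Or.inr hc0)
  set ψ : ℝ → ℂ := fun v => (v:ℂ) * dslope F 0 (w v) with hψ
  set f' : ℝ → ℂ := fun v => ((γ:ℝ)⁻¹ : ℝ) * dslope E2 0 (w v) with hf'
  -- continuity of dslope functions on the ball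
  have hdsF : ContinuousOn (dslope F 0) (ball (0:ℂ) 1) := by
    rw [continuousOn_dslope (ball_mem_nhds 0 one_pos)]
    exact ⟨hFa.continuousOn, (hFa 0 (by simp)).differentiableAt⟩
  have hE2cont : ContinuousOn E2 (ball (0:ℂ) 1) := by
    exact ((continuousOn_const.mul continuousOn_id).mul hA1.continuousOn).add
      (continuousOn_const.mul hFa.continuousOn)
  have hdsE2 : ContinuousOn (dslope E2 0) (ball (0:ℂ) 1) := by
    rw [continuousOn_dslope (ball_mem_nhds 0 one_pos)]
    exact ⟨hE2cont, (hE2d 0 (by simp)).differentiableAt⟩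
  have hcontψ : ContinuousOn ψ (Icc (0:ℝ) 1) := by
    simp only [hψ]
    apply ContinuousOn.mul (Complex.continuous_ofReal.continuousOn)
    exact hdsF.comp hwc.continuousOn hwmem
  have hintf' : IntervalIntegrable f' MeasureTheory.volume 0 1 := by
    apply ContinuousOn.intervalIntegrable
    rw [uIcc_of_le zero_le_one]
    simp only [hf']
    exact continuousOn_const.mul (hdsE2.comp hwc.continuousOn hwmem)
  have hderivψ : ∀ v ∈ Ioo (0:ℝ) 1, HasDerivWithinAt ψ (f' v) (Ioi v) v := by
    intro v hv
    have hv0 : 0 < v := hv.1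
    have hwv : w v ≠ 0 := hwne v hv0
    have hwvmem : w v ∈ ball (0:ℂ) 1 := hwmem v ⟨hv0.le, hv.2.le⟩
    have hvC : ((v:ℝ):ℂ) ≠ 0 := by
      simp only [ne_eq, Complex.ofReal_eq_zero]; exact hv0.ne'
    have hγC : (γ:ℂ) ≠ 0 := by
      simp only [ne_eq, Complex.ofReal_eq_zero]; exact hγ.ne'
    set W' : ℂ := ((c * v ^ (c-1) : ℝ) : ℂ) * z with hW'def
    have hrpow : HasDerivAt (fun v : ℝ => v ^ c) (c * v ^ (c - 1)) v :=
      Real.hasDerivAt_rpow_const (Or.inl hv0.ne')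
    have hwd : HasDerivAt w W' v := (hrpow.ofReal_comp).mul_const z
    have hvW : (v : ℂ) * W' = (c:ℂ) * w v := by
      rw [hW'def, hwdef]
      have hvv : v * (c * v ^ (c-1)) = c * v ^ c := by
        rw [Real.rpow_sub hv0, Real.rpow_one]; field_simp
      have h2 : ((v:ℝ):ℂ) * (((c * v ^ (c-1):ℝ)):ℂ) = ((c:ℝ):ℂ) * (((v ^ c:ℝ)):ℂ) := by
        rw [← Complex.ofReal_mul, ← Complex.ofReal_mul, hvv]
      linear_combination z * h2
    have hW'eq : W' = (c:ℂ) * w v / (v:ℂ) := by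
      rw [eq_div_iff hvC]; linear_combination hvW
    have hcγ : (c:ℂ) * (γ:ℂ) = (α:ℂ) := by
      rw [hc]; push_cast; field_simp
    have hFw : HasDerivAt (fun v : ℝ => F (w v)) (W' * D1 (w v)) v := by
      have h1 := HasDerivAt.scomp (x := v) (h := w) (hg := hD1d _ hwvmem) (hh := hwd)
      exact h1
    have hwinv : HasDerivAt (fun v : ℝ => (w v)⁻¹) (W' * -(((w v)^2)⁻¹)) v := by
      have h0 : HasDerivAt (fun ζ : ℂ => ζ⁻¹) (-(((w v)^2)⁻¹)) (w v) := hasDerivAt_inv hwv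
      have h1 := HasDerivAt.scomp (x := v) (h := w) (hg := h0) (hh := hwd)
      exact h1
    have hf'v : f' v = ((γ:ℝ)⁻¹ : ℝ) * ((w v)⁻¹ *
        ((α:ℂ) * w v * D1 (w v) + (β:ℂ) * F (w v))) := by
      simp only [hf']
      rw [dslope_of_ne _ hwv, slope_def_field, hE20, sub_zero, sub_zero, div_eq_inv_mul]
      try simp only [hE2]
    have hid : HasDerivAt (fun v : ℝ => ((v:ℝ) : ℂ)) 1 v := by
      have h := (hasDerivAt_id v).ofReal_comp
      simp only [id_eq, Complex.ofReal_one] at h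
      exact h
    have hφ : HasDerivAt (fun v : ℝ => (v:ℂ) * (F (w v) * (w v)⁻¹)) (f' v) v := by
      have hder := hid.mul (hFw.mul hwinv)
      convert hder using 1
      · rfl
      · rfl
      rw [hf'v, hba, ← hcγ, Complex.ofReal_inv]
      exact (key_alg (γ:ℂ) (c:ℂ) (v:ℂ) (w v) W' (F (w v)) (D1 (w v))
        hwv hγC hvC hW'eq).symm
    have hev : ψ =ᶠ[nhds v] (fun v : ℝ => (v:ℂ) * (F (w v) * (w v)⁻¹)) := by
      have hmem : Ioi (0:ℝ) ∈ nhds v := Ioi_mem_nhds hv0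
      filter_upwards [hmem] with x hx
      show (x:ℂ) * dslope F 0 (w x) = (x:ℂ) * (F (w x) * (w x)⁻¹)
      rw [dslope_of_ne _ (hwne x hx), slope_def_field, hF0, sub_zero, sub_zero,
        div_eq_mul_inv]
    have hψder : HasDerivAt ψ (f' v) v := hφ.congr_of_eventuallyEq hev
    exact hψder.hasDerivWithinAt
  have hFTC3 := intervalIntegral.integral_eq_sub_of_hasDeriv_right_of_le zero_le_one
    hcontψ hderivψ hintf'
  have hψ1 : ψ 1 = dslope F 0 z := by
    simp [hψ, hwdef, Real.one_rpow]
  have hψ0 : ψ 0 = 0 := by simp [hψ]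
  rw [hψ1, hψ0, sub_zero] at hFTC3
  -- now take real parts and estimate
  have hdsz : dslope F 0 z = F z / z := by
    rw [dslope_of_ne _ hz0, slope_def_field, hF0, sub_zero, sub_zero]
  have hre3 : (F z / z).re = ∫ v in (0:ℝ)..1, (f' v).re := by
    rw [← hdsz, ← hFTC3]
    exact (Complex.reCLM.intervalIntegral_comp_comm hintf').symm
  rw [hre3]
  have hlow : ∀ v ∈ Icc (0:ℝ) 1,
      γ⁻¹ * (γ - ((γ - lam)/2*‖z‖) * v ^ c) ≤ (f' v).re := by
    intro v hv
    have hb := hB2 _ (hwmem v hv)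
    have hn : ‖w v‖ = v ^ c * ‖z‖ := by
      rw [hwdef, norm_mul, Complex.norm_real, Real.norm_eq_abs,
        _root_.abs_of_nonneg (Real.rpow_nonneg hv.1 c)]
    rw [hn] at hb
    have : (f' v).re = γ⁻¹ * (dslope E2 0 (w v)).re := by
      simp only [hf']
      rw [Complex.re_ofReal_mul]
    rw [this]
    apply mul_le_mul_of_nonneg_left _ (by positivity)
    calc γ - ((γ - lam)/2*‖z‖) * v ^ c = γ - (γ - lam)/2*(v ^ c * ‖z‖) := by ring
      _ ≤ _ := hb
  have hmono := intervalIntegral.integral_mono_on (μ := MeasureTheory.volume) zero_le_one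
    (by
      apply ContinuousOn.intervalIntegrable
      apply ContinuousOn.mul continuousOn_const
      apply ContinuousOn.sub continuousOn_const
      apply ContinuousOn.mul continuousOn_const
      rw [uIcc_of_le zero_le_one]
      rcases eq_or_lt_of_le hc0 with hc' | hc'
      · simp only [← hc', Real.rpow_zero]; exact continuousOn_const
      · exact (continuous_id.rpow_const (fun x => Or.inr hc0)).continuousOn)
    (by
      apply ContinuousOn.intervalIntegrable
      rw [uIcc_of_le zero_le_one]
      simp only [hf']
      exact Complex.continuous_re.comp_continuousOn
        (continuousOn_const.mul (hdsE2.comp hwc.continuousOn hwmem)))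
    hlow
  have hval : (∫ v in (0:ℝ)..1, γ⁻¹ * (γ - ((γ - lam)/2*‖z‖) * v ^ c))
      = 1 - (γ - lam)*‖z‖/(γ + δ) := by
    rw [intervalIntegral.integral_const_mul]
    rw [intervalIntegral.integral_sub intervalIntegrable_const
      (by
        apply IntervalIntegrable.const_mul
        exact intervalIntegral.intervalIntegrable_rpow (Or.inl hc0))]
    rw [intervalIntegral.integral_const_mul, integral_rpow (Or.inl (by linarith))]
    rw [Real.one_rpow, Real.zero_rpow (by positivity)]
    have hcc : c + 1 = (γ + δ)/(2*γ) := by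
      rw [hc, hα]; field_simp; ring
    rw [hcc]
    rw [intervalIntegral.integral_const, sub_zero, smul_eq_mul, one_mul]
    have hγδ : 0 < γ + δ := by linarith
    field_simp
  rw [hval] at hmono
  have hfinal : (γ - lam)*‖z‖/(γ + δ) < 1/2 := by
    have hγδ : 0 < γ + δ := by linarith
    rw [div_lt_iff₀ hγδ]
    nlinarith [norm_nonneg z]
  calc (1:ℝ)/2 < 1 - (γ - lam)*‖z‖/(γ + δ) := by linarith
    _ ≤ _ := hmono
end
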